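/- arXiv:1808.01277 — 4 statements merged into one kernel-verified Lean document; each statement's English description precedes it below -/
import Mathlib

section
/- Let (Z_j)_{j≥1} be independent Poisson random variables where Z_j has mean λ_j ≤ (α/j)·(1/(2e))^j for some α > 0. Then E[exp(Σ_{j≥1} j·Z_j)] ≤ e^α, and consequently for every k ≥ 0, P[Σ_{j≥1} j·Z_j ≥ k] ≤ exp(α − k). -/
/-!
Since the summands are nonnegative, `exp` of the series is the increasing limit of `exp` of its
partial sums, so monotone convergence and independence give
`E[exp (∑ (j+1) Z_j)] = sup_n ∏_{j<n} E[exp ((j+1) Z_j)] = sup_n exp (∑_{j<n} λ_j (e^{j+1} - 1))`.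
The bound on `λ_j` makes the `j`-th exponent at most `α / 2^{j+1}`, so the moment is at most
`e^α`; the tail bound is Markov's inequality for `exp` of the sum.
-/

open MeasureTheory ProbabilityTheory
open scoped ENNReal NNReal

/-- `exp` extended to `ℝ≥0∞`, with `exp ∞ = ∞`. -/
noncomputable def expENN (x : ℝ≥0∞) : ℝ≥0∞ :=
  if x = ∞ then ∞ else ENNReal.ofReal (Real.exp x.toReal)

open Finset

lemma expENN_eq_exp_coe (x : ℝ≥0∞) : expENN x = EReal.exp x := by
  rcases eq_or_ne x ∞ with rfl | hx
  · simp [expENN]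
  · rw [expENN, if_neg hx, ← EReal.coe_ennreal_toReal hx, EReal.exp_coe]

lemma expENN_ofReal {a : ℝ} (ha : 0 ≤ a) :
    expENN (ENNReal.ofReal a) = ENNReal.ofReal (Real.exp a) := by
  rw [expENN, if_neg ENNReal.ofReal_ne_top, ENNReal.toReal_ofReal ha]

lemma continuous_expENN : Continuous expENN := by
  rw [funext expENN_eq_exp_coe]
  exact ENNReal.continuous_exp.comp continuous_coe_ennreal_ereal

lemma monotone_expENN : Monotone expENN := fun a b hab => by
  simpa only [expENN_eq_exp_coe, EReal.exp_le_exp_iff, EReal.coe_ennreal_le_coe_ennreal_iff]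

lemma measurable_expENN : Measurable expENN := continuous_expENN.measurable

lemma expENN_sum {ι : Type*} (s : Finset ι) (f : ι → ℝ≥0∞) :
    expENN (∑ i ∈ s, f i) = ∏ i ∈ s, expENN (f i) := by
  induction s using Finset.cons_induction with
  | empty => simp [expENN_eq_exp_coe]
  | cons i s hi ih =>
    rw [sum_cons, prod_cons, ← ih, expENN_eq_exp_coe, expENN_eq_exp_coe, expENN_eq_exp_coe,
      EReal.coe_ennreal_add, EReal.exp_add]

lemma expENN_tsum (f : ℕ → ℝ≥0∞) :
    expENN (∑' i, f i) = ⨆ n, expENN (∑ i ∈ range n, f i) := by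
  rw [ENNReal.tsum_eq_iSup_nat]
  exact monotone_expENN.map_ciSup_of_continuousAt continuous_expENN.continuousAt

theorem ProbabilityTheory.iIndepFun.lintegral_expENN_tsum {Ω : Type*} [MeasurableSpace Ω]
    {μ : Measure Ω} {X : ℕ → Ω → ℝ≥0∞} (hind : iIndepFun X μ) (hX : ∀ j, Measurable (X j)) :
    ∫⁻ ω, expENN (∑' j, X j ω) ∂μ = ⨆ n, ∏ j ∈ range n, ∫⁻ ω, expENN (X j ω) ∂μ := by
  have hmono : Monotone fun n ω => expENN (∑ j ∈ range n, X j ω) := fun m n hmn ω =>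
    monotone_expENN (sum_le_sum_of_subset (range_subset_range.mpr hmn))
  simp_rw [expENN_tsum]
  rw [lintegral_iSup (f := fun n ω => expENN (∑ j ∈ range n, X j ω))
    (fun n => measurable_expENN.comp (Finset.measurable_sum _ fun j _ => hX j)) hmono]
  simp_rw [expENN_sum]
  congr with n
  exact lintegral_prod_eq_prod_lintegral_of_indepFun _ _
    (hind.comp (fun _ => expENN) fun _ => measurable_expENN) fun j => measurable_expENN.comp (hX j)

lemma lintegral_exp_mul_poissonMeasure (r : ℝ≥0) (t : ℝ) :
    ∫⁻ n, ENNReal.ofReal (Real.exp (t * n)) ∂poissonMeasure r =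
      ENNReal.ofReal (Real.exp (r * (Real.exp t - 1))) := by
  have hsum : HasSum (fun n : ℕ => Real.exp (t * n) * (Real.exp (-r) * r ^ n / n.factorial))
      (Real.exp (r * (Real.exp t - 1))) := by
    have h := (NormedSpace.expSeries_div_hasSum_exp ((r : ℝ) * Real.exp t)).mul_left
      (Real.exp (-r))
    rw [← Real.exp_eq_exp_ℝ, ← Real.exp_add, show -(r : ℝ) + r * Real.exp t = r * (Real.exp t - 1)
      by ring] at h
    refine h.congr_fun fun n => ?_
    rw [mul_pow, ← Real.exp_nat_mul, mul_comm (n : ℝ) t]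
    ring
  rw [lintegral_countable', ← hsum.tsum_eq,
    ENNReal.ofReal_tsum_of_nonneg (fun n => by positivity) hsum.summable]
  refine tsum_congr fun n => ?_
  rw [poissonMeasure_singleton, ENNReal.ofReal_mul (Real.exp_pos _).le]

lemma lintegral_expENN_mul_of_map_eq_poissonMeasure {Ω : Type*} [MeasurableSpace Ω]
    {μ : Measure Ω} {Y : Ω → ℕ} (hY : Measurable Y) {r : ℝ≥0}
    (hlaw : μ.map Y = poissonMeasure r) (t : ℝ≥0) :
    ∫⁻ ω, expENN (t * Y ω) ∂μ = ENNReal.ofReal (Real.exp (r * (Real.exp t - 1))) := by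
  rw [← lintegral_exp_mul_poissonMeasure, ← hlaw, lintegral_map measurable_from_top hY]
  refine lintegral_congr fun ω => ?_
  rw [← expENN_ofReal (by positivity), ENNReal.ofReal_mul t.coe_nonneg, ENNReal.ofReal_coe_nnreal,
    ENNReal.ofReal_natCast]

lemma mul_exp_succ_sub_one_le_half_pow {α r : ℝ} (hα : 0 ≤ α) (hr : 0 ≤ r) (j : ℕ)
    (hrj : r ≤ α / (j + 1) * (1 / (2 * Real.exp 1)) ^ (j + 1)) :
    r * (Real.exp (j + 1) - 1) ≤ α * (1 / 2) ^ (j + 1) := by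
  have hexp : Real.exp (j + 1) = Real.exp 1 ^ (j + 1) := by
    rw [← Real.exp_nat_mul]; push_cast; ring_nf
  calc r * (Real.exp (j + 1) - 1)
      ≤ r * Real.exp (j + 1) := by gcongr; linarith
    _ ≤ α / (j + 1) * (1 / (2 * Real.exp 1)) ^ (j + 1) * Real.exp (j + 1) := by gcongr
    _ = α / (j + 1) * (1 / 2) ^ (j + 1) := by
      rw [hexp, mul_assoc, ← mul_pow]
      field_simp
    _ ≤ α * (1 / 2) ^ (j + 1) := by
      gcongr
      exact div_le_self hα (by linarith [j.cast_nonneg (α := ℝ)])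

lemma sum_range_half_pow_succ_le_one (n : ℕ) : ∑ j ∈ range n, (1 / 2 : ℝ) ^ (j + 1) ≤ 1 := by
  simp_rw [pow_succ, ← sum_mul]
  linarith [sum_geometric_two_le n]

lemma expENN_mul_meas_ge_le_lintegral {Ω : Type*} [MeasurableSpace Ω] (μ : Measure Ω)
    {S : Ω → ℝ≥0∞} (hS : AEMeasurable S μ) (a : ℝ≥0∞) :
    expENN a * μ {ω | a ≤ S ω} ≤ ∫⁻ ω, expENN (S ω) ∂μ :=
  calc expENN a * μ {ω | a ≤ S ω} ≤ expENN a * μ {ω | expENN a ≤ expENN (S ω)} := by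
        gcongr expENN a * ?_
        exact measure_mono fun _ hω => monotone_expENN hω
    _ ≤ ∫⁻ ω, expENN (S ω) ∂μ :=
        mul_meas_ge_le_lintegral₀ (measurable_expENN.comp_aemeasurable hS) _

theorem poisson_sum_exp_moment_bound_general
    {Ω : Type*} [MeasurableSpace Ω] (μpr : Measure Ω)
    (α : ℝ) (hα : 0 < α) (lam : ℕ → ℝ≥0) (Z : ℕ → Ω → ℕ)
    (hmeas : ∀ j, Measurable (Z j))
    (hindep : iIndepFun Z μpr)
    (hdist : ∀ j, Measure.map (Z j) μpr = poissonMeasure (lam j))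
    (hlam : ∀ j : ℕ,
      (lam j : ℝ) ≤ (α / (j + 1)) * (1 / (2 * Real.exp 1)) ^ (j + 1)) :
    (∫⁻ ω, expENN (∑' j : ℕ, ((j : ℝ≥0∞) + 1) * (Z j ω : ℝ≥0∞)) ∂μpr)
        ≤ ENNReal.ofReal (Real.exp α) ∧
      ∀ k : ℕ,
        μpr {ω | (k : ℝ≥0∞) ≤ ∑' j : ℕ, ((j : ℝ≥0∞) + 1) * (Z j ω : ℝ≥0∞)}
          ≤ ENNReal.ofReal (Real.exp (α - k)) := by
  set X : ℕ → Ω → ℝ≥0∞ := fun j ω => ((j : ℝ≥0∞) + 1) * (Z j ω : ℝ≥0∞)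
  have hX : ∀ j, Measurable (X j) := fun j =>
    (measurable_from_top (f := fun m : ℕ => ((j : ℝ≥0∞) + 1) * m)).comp (hmeas j)
  have hXindep : iIndepFun X μpr :=
    hindep.comp (fun j (m : ℕ) => ((j : ℝ≥0∞) + 1) * m) fun _ => measurable_from_top
  have hfactor : ∀ j, ∫⁻ ω, expENN (X j ω) ∂μpr
      = ENNReal.ofReal (Real.exp (lam j * (Real.exp (j + 1) - 1))) := fun j => by
    simpa using lintegral_expENN_mul_of_map_eq_poissonMeasure (hmeas j) (hdist j) (j + 1)
  have hmoment : ∫⁻ ω, expENN (∑' j, X j ω) ∂μpr ≤ ENNReal.ofReal (Real.exp α) := by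
    rw [hXindep.lintegral_expENN_tsum hX]
    refine iSup_le fun n => ?_
    simp_rw [hfactor, ← ENNReal.ofReal_prod_of_nonneg fun _ _ => (Real.exp_pos _).le,
      ← Real.exp_sum]
    gcongr
    calc ∑ j ∈ range n, (lam j : ℝ) * (Real.exp (j + 1) - 1)
        ≤ ∑ j ∈ range n, α * (1 / 2) ^ (j + 1) :=
          sum_le_sum fun j _ => mul_exp_succ_sub_one_le_half_pow hα.le (lam j).coe_nonneg j (hlam j)
      _ ≤ α := by
        rw [← mul_sum]
        exact mul_le_of_le_one_right hα.le (sum_range_half_pow_succ_le_one n)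
  refine ⟨hmoment, fun k => ?_⟩
  have hmarkov := (expENN_mul_meas_ge_le_lintegral μpr
    (Measurable.tsum hX).aemeasurable k).trans hmoment
  rw [← ENNReal.ofReal_natCast, expENN_ofReal k.cast_nonneg, ENNReal.ofReal_natCast] at hmarkov
  rw [Real.exp_sub, ENNReal.ofReal_div_of_pos (Real.exp_pos _),
    ENNReal.le_div_iff_mul_le (by simp [Real.exp_pos]) (by simp), mul_comm]
  exact hmarkov

/-- Let `Z 0, Z 1, …` (representing `Z_1, Z_2, …`) be independent Poisson random variables,
where `Z j` (i.e. `Z_{j+1}`) has mean `lam j ≤ (α/(j+1))·(1/(2e))^{j+1}` for some `α > 0`.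
Then `E[exp (Σ_{j≥1} j·Z_j)] ≤ e^α`, and hence for every `k`,
`P[Σ_{j≥1} j·Z_j ≥ k] ≤ exp (α − k)`. -/
theorem poisson_sum_exp_moment_bound
    {Ω : Type*} [MeasurableSpace Ω] (μpr : Measure Ω) [IsProbabilityMeasure μpr]
    (α : ℝ) (hα : 0 < α) (lam : ℕ → ℝ≥0) (Z : ℕ → Ω → ℕ)
    (hmeas : ∀ j, Measurable (Z j))
    (hindep : iIndepFun Z μpr)
    (hdist : ∀ j, Measure.map (Z j) μpr = poissonMeasure (lam j))
    (hlam : ∀ j : ℕ,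
      (lam j : ℝ) ≤ (α / (j + 1)) * (1 / (2 * Real.exp 1)) ^ (j + 1)) :
    (∫⁻ ω, expENN (∑' j : ℕ, ((j : ℝ≥0∞) + 1) * (Z j ω : ℝ≥0∞)) ∂μpr)
        ≤ ENNReal.ofReal (Real.exp α) ∧
      ∀ k : ℕ,
        μpr {ω | (k : ℝ≥0∞) ≤ ∑' j : ℕ, ((j : ℝ≥0∞) + 1) * (Z j ω : ℝ≥0∞)}
          ≤ ENNReal.ofReal (Real.exp (α - k)) :=
  poisson_sum_exp_moment_bound_general μpr α hα lam Z hmeas hindep hdist hlam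
end

section
/- With the setup of the dyadic-tree embeddings: fix l ≥ 6, scales L_n = L_0 l^n, and 𝒯 ∈ Λ_n. Then for every k ≥ 0 and every leaf m ∈ T_{(n)}, the number of leaves m' ∈ T_{(n)} with ‖𝒯(m') − 𝒯(m)‖_∞ ≤ ((l−5)/(l−1))·L_{k+1} is at most 2^k. -/
/-- ℓ∞ norm on `ℤ^d`. -/
def linf {d : ℕ} (x : Fin d → ℤ) : ℕ := Finset.univ.sup fun i => (x i).natAbs

/-- Vertices of the dyadic tree of depth `n`: binary words of length at most `n`. -/
def TreeVert (n : ℕ) := {l : List (Fin 2) // l.length ≤ n}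

/-- The set `Λ_n` of embeddings `𝒯` of the depth-`n` dyadic tree into `ℤ^d`:
`𝒯(∅) = 0`; `𝒯(m) ∈ L_{n-k} ℤ^d` for `m` at depth `k` (where `L_j = L₀ l^j`); and
`‖𝒯(mi) − 𝒯(m)‖_∞ = i · L_{n-k}` for `m` at depth `k` and child label `i ∈ {1,2}`
(a label `i : Fin 2` stands for the digit `i+1`). -/
def Lam (d n L₀ l : ℕ) : Set (TreeVert n → (Fin d → ℤ)) :=
  {T | T ⟨[], by simp⟩ = 0 ∧
    (∀ m : TreeVert n, ∀ i : Fin d,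
      ((L₀ * l ^ (n - m.1.length) : ℕ) : ℤ) ∣ T m i) ∧
    ∀ (m : TreeVert n) (hm : m.1.length < n) (i : Fin 2),
      linf (T ⟨m.1 ++ [i], by simpa using hm⟩ - T m)
        = (i.1 + 1) * (L₀ * l ^ (n - m.1.length))}

/-!
A leaf lies within `2(L_1 + ⋯ + L_{K-1}) < 2 L_K / (l - 1)` of its ancestor at height `K - 1`
(height = `n` − depth), because the edge lengths `L_i, 2 L_i` grow geometrically with ratio `l`;
and the two children of a vertex at height `K` are at distance at least `L_K`. So leaves whose
paths separate at height `K > k` are farther apart than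
`L_K - 4 L_K / (l - 1) ≥ (l - 5)/(l - 1) · L_{k+1}`: all leaves that close to `m` share its
first `n - k` letters, and there are at most `2^k` of them.
-/

open Finset

lemma linf_neg {d : ℕ} (x : Fin d → ℤ) : linf (-x) = linf x := by
  simp [linf]

lemma linf_sub_comm {d : ℕ} (x y : Fin d → ℤ) : linf (x - y) = linf (y - x) := by
  rw [← linf_neg, neg_sub]

lemma linf_add_le {d : ℕ} (x y : Fin d → ℤ) : linf (x + y) ≤ linf x + linf y :=
  Finset.sup_le fun _ hi => (Int.natAbs_add_le _ _).trans <|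
    add_le_add (Finset.le_sup (f := fun j => (x j).natAbs) hi)
      (Finset.le_sup (f := fun j => (y j).natAbs) hi)

lemma linf_sub_le {d : ℕ} (x y z : Fin d → ℤ) : linf (x - z) ≤ linf (x - y) + linf (y - z) := by
  simpa using linf_add_le (x - y) (y - z)

lemma card_lists_length_eq (α : Type*) [Fintype α] (k : ℕ) :
    {v : List α | v.length = k}.ncard = Fintype.card α ^ k := by
  rw [← Nat.card_coe_set_eq]
  change Nat.card (List.Vector α k) = _
  simp

namespace TreeVert

variable {n : ℕ}

def ancestor (m : TreeVert n) (j : ℕ) : TreeVert n :=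
  ⟨m.1.take j, (m.1.length_take_le' j).trans m.2⟩

lemma ancestor_of_length_le {m : TreeVert n} {j : ℕ} (h : m.1.length ≤ j) : m.ancestor j = m :=
  Subtype.ext (List.take_of_length_le h)

lemma ancestor_length {m : TreeVert n} {j : ℕ} (h : j ≤ m.1.length) :
    (m.ancestor j).1.length = j :=
  List.length_take_of_le h

lemma ancestor_succ {m : TreeVert n} {j : ℕ} (h : j < m.1.length) :
    (m.ancestor (j + 1)).1 = (m.ancestor j).1 ++ [m.1[j]] :=
  (List.take_concat_get' m.1 j h).symm

lemma ncard_le_of_forall_take_eq (s : Set (TreeVert n)) (j : ℕ) (p : List (Fin 2))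
    (hs : ∀ w ∈ s, w.1.length = n ∧ w.1.take j = p) : s.ncard ≤ 2 ^ (n - j) := by
  have hcard := card_lists_length_eq (Fin 2) (n - j)
  rw [Fintype.card_fin] at hcard
  rw [← hcard]
  refine Set.ncard_le_ncard_of_injOn (fun w => w.1.drop j) (fun w hw => ?_)
    (fun w hw w' hw' h => ?_) (Set.finite_of_ncard_ne_zero (by rw [hcard]; positivity))
  · simp [(hs w hw).1]
  · apply Subtype.ext
    rw [← List.take_append_drop j w.1, ← List.take_append_drop j w'.1, (hs w hw).2,
      (hs w' hw').2]
    exact congrArg (p ++ ·) h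

end TreeVert

/-- Leaves whose paths split at height `K` are at distance at least `C x^K - 4 C ∑_{1 ≤ i < K} x^i`
(one sibling gap minus two geometric chains of edges of length `≤ 2 C x^i`); multiplied by
`x - 1` this is `(x - 5) C x^K + 4 C x`. -/
lemma div_mul_lt_pow_sub_geom_sum {x C : ℝ} (hx : 5 ≤ x) (hC : 0 < C) {k K : ℕ} (hkK : k < K) :
    (x - 5) / (x - 1) * (C * x ^ (k + 1)) < C * x ^ K - 4 * C * ∑ i ∈ Ico 1 K, x ^ i := by
  have hgeom := geom_sum_Ico_mul x (show 1 ≤ K by omega)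
  have hpow : x ^ (k + 1) ≤ x ^ K := pow_le_pow_right₀ (by linarith) hkK
  rw [div_mul_eq_mul_div, div_lt_iff₀ (by linarith)]
  nlinarith [mul_le_mul_of_nonneg_left hpow (by nlinarith : 0 ≤ (x - 5) * C),
    mul_pos hC (by linarith : 0 < x)]

namespace Lam

variable {d n L₀ l : ℕ} {T : TreeVert n → (Fin d → ℤ)}

lemma linf_child_sub (hT : T ∈ Lam d n L₀ l) {m c : TreeVert n} (hm : m.1.length < n)
    {i : Fin 2} (hc : c.1 = m.1 ++ [i]) :
    linf (T c - T m) = (i.1 + 1) * (L₀ * l ^ (n - m.1.length)) := by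
  obtain rfl : c = ⟨m.1 ++ [i], by simpa using hm⟩ := Subtype.ext hc
  exact hT.2.2 m hm i

lemma le_linf_sub_of_siblings (hT : T ∈ Lam d n L₀ l) {m c c' : TreeVert n}
    (hm : m.1.length < n) {i i' : Fin 2} (hc : c.1 = m.1 ++ [i]) (hc' : c'.1 = m.1 ++ [i'])
    (hii' : i ≠ i') : L₀ * l ^ (n - m.1.length) ≤ linf (T c - T c') := by
  have h := linf_child_sub hT hm hc
  have h' := linf_child_sub hT hm hc'
  have hle := linf_sub_le (T c) (T c') (T m)
  have hle' := linf_sub_le (T c') (T c) (T m)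
  rw [linf_sub_comm (T c') (T c)] at hle'
  fin_cases i <;> fin_cases i' <;> simp at h h' hii' <;> omega

lemma linf_sub_ancestor_le (hT : T ∈ Lam d n L₀ l) {w : TreeVert n} (hw : w.1.length = n)
    {j : ℕ} (hj : j ≤ n) :
    linf (T w - T (w.ancestor j)) ≤ 2 * L₀ * ∑ i ∈ Ico 1 (n - j + 1), l ^ i := by
  induction hj using Nat.decreasingInduction with
  | self => simp [TreeVert.ancestor_of_length_le hw.le, linf]
  | of_succ j hj ih =>
    have hedge := linf_child_sub hT (m := w.ancestor j)
      (by rw [TreeVert.ancestor_length (by omega)]; exact hj) (TreeVert.ancestor_succ (by omega))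
    rw [TreeVert.ancestor_length (by omega)] at hedge
    have hsplit : n - (j + 1) + 1 = n - j := by omega
    rw [hsplit] at ih
    calc linf (T w - T (w.ancestor j))
        ≤ linf (T w - T (w.ancestor (j + 1)))
            + linf (T (w.ancestor (j + 1)) - T (w.ancestor j)) := linf_sub_le _ _ _
      _ ≤ 2 * L₀ * ∑ i ∈ Ico 1 (n - j), l ^ i + 2 * (L₀ * l ^ (n - j)) := by
          gcongr
          rw [hedge]
          gcongr
          omega
      _ = 2 * L₀ * ∑ i ∈ Ico 1 (n - j + 1), l ^ i := by
          rw [Finset.sum_Ico_succ_top (by omega)]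
          ring

lemma le_linf_sub_add_of_getElem_ne (hT : T ∈ Lam d n L₀ l) {w w' : TreeVert n}
    (hw : w.1.length = n) (hw' : w'.1.length = n) {p : ℕ} (hp : p < n)
    (htake : w.1.take p = w'.1.take p) (hne : w.1[p]'(by omega) ≠ w'.1[p]'(by omega)) :
    L₀ * l ^ (n - p) ≤ linf (T w - T w') + 4 * L₀ * ∑ i ∈ Ico 1 (n - p), l ^ i := by
  have hsib := le_linf_sub_of_siblings hT (m := w.ancestor p) (c := w.ancestor (p + 1))
    (c' := w'.ancestor (p + 1)) (by rw [TreeVert.ancestor_length (by omega)]; exact hp)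
    (TreeVert.ancestor_succ (by omega))
    (by rw [TreeVert.ancestor_succ (by omega)]; exact congrArg (· ++ _) htake.symm) hne
  rw [TreeVert.ancestor_length (by omega)] at hsib
  have hanc := linf_sub_ancestor_le hT hw (j := p + 1) hp
  have hanc' := linf_sub_ancestor_le hT hw' (j := p + 1) hp
  rw [show n - (p + 1) + 1 = n - p by omega] at hanc hanc'
  have hle := linf_sub_le (T (w.ancestor (p + 1))) (T w) (T (w'.ancestor (p + 1)))
  have hle' := linf_sub_le (T w) (T w') (T (w'.ancestor (p + 1)))
  rw [linf_sub_comm (T (w.ancestor (p + 1))) (T w)] at hle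
  linarith

lemma take_eq_of_linf_sub_le (hT : T ∈ Lam d n L₀ l) (hL₀ : 0 < L₀) (hl : 5 ≤ l)
    {w w' : TreeVert n} (hw : w.1.length = n) (hw' : w'.1.length = n) {k : ℕ}
    (hclose : (linf (T w - T w') : ℝ) ≤ ((l : ℝ) - 5) / ((l : ℝ) - 1) * (L₀ * l ^ (k + 1))) :
    w.1.take (n - k) = w'.1.take (n - k) := by
  suffices ∀ j ≤ n - k, w.1.take j = w'.1.take j from this _ le_rfl
  intro j hj
  induction j with
  | zero => simp
  | succ j ih =>
    have htake := ih (by omega)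
    have hsame : w.1[j]'(by omega) = w'.1[j]'(by omega) := by
      by_contra hne
      have hfar := le_linf_sub_add_of_getElem_ne hT hw hw' (by omega) htake hne
      have hlt := div_mul_lt_pow_sub_geom_sum (x := l) (C := L₀) (by exact_mod_cast hl)
        (by exact_mod_cast hL₀) (show k < n - j by omega)
      have hfarℝ : ((L₀ * l ^ (n - j) : ℕ) : ℝ)
          ≤ ((linf (T w - T w') + 4 * L₀ * ∑ i ∈ Ico 1 (n - j), l ^ i : ℕ) : ℝ) := by
        exact_mod_cast hfar
      push_cast at hfarℝ
      linarith
    rw [← List.take_concat_get' w.1 j (by omega), ← List.take_concat_get' w'.1 j (by omega),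
      htake, hsame]

end Lam

theorem Lam_leaf_separation_general (d n L₀ l : ℕ) (hL₀ : 1 ≤ L₀) (hl : 6 ≤ l)
    (T : TreeVert n → (Fin d → ℤ)) (hT : T ∈ Lam d n L₀ l)
    (k : ℕ) (m : TreeVert n) (hm : m.1.length = n) :
    Set.ncard {m' : TreeVert n | m'.1.length = n ∧
        (linf (T m' - T m) : ℝ) ≤ (((l : ℝ) - 5) / ((l : ℝ) - 1)) * (L₀ * l ^ (k + 1))}
      ≤ 2 ^ k := by
  calc _ ≤ 2 ^ (n - (n - k)) :=
        TreeVert.ncard_le_of_forall_take_eq _ (n - k) (m.1.take (n - k)) fun _ hw =>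
          ⟨hw.1, Lam.take_eq_of_linf_sub_le hT hL₀ (by omega) hw.1 hm hw.2⟩
    _ ≤ 2 ^ k := Nat.pow_le_pow_right two_pos (by omega)

/-- Separation of leaves of a tree embedding: for `l ≥ 6`, `𝒯 ∈ Λ_n`, every `k ≥ 0` and every
leaf `m` (depth `n`), the number of leaves `m'` with
`‖𝒯(m') − 𝒯(m)‖_∞ ≤ ((l−5)/(l−1))·L_{k+1}` is at most `2^k`. -/
theorem Lam_leaf_separation (d n L₀ l : ℕ) (hd : 1 ≤ d) (hL₀ : 1 ≤ L₀) (hl : 6 ≤ l)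
    (T : TreeVert n → (Fin d → ℤ)) (hT : T ∈ Lam d n L₀ l)
    (k : ℕ) (m : TreeVert n) (hm : m.1.length = n) :
    Set.ncard {m' : TreeVert n | m'.1.length = n ∧
        (linf (T m' - T m) : ℝ) ≤ (((l : ℝ) - 5) / ((l : ℝ) - 1)) * (L₀ * l ^ (k + 1))}
      ≤ 2 ^ k :=
  Lam_leaf_separation_general d n L₀ l hL₀ hl T hT k m hm
end

section
/- Stochastic domination of the loop-soup vacant set by Bernoulli percolation: the vacant set V^α of the random walk loop soup on Z^d at intensity α is stochastically dominated by Bernoulli site percolation with parameter exp(−α/(4d²)); in particular, for each x ∈ Z^d, P[x ∈ V^α] ≤ exp(−α/(4d²)). -/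
open MeasureTheory ProbabilityTheory
open scoped ENNReal NNReal Classical

/-- ℓ¹ norm on `ℤ^d`. -/
def lone {d : ℕ} (x : Fin d → ℤ) : ℕ := ∑ i, (x i).natAbs

/-- A (non-trivial discrete) based loop in `ℤ^d`: a nearest-neighbor path `(x₁,…,x_n)` with
`x_n` a neighbor of `x₁`. -/
def IsBasedLoop {d : ℕ} (p : List (Fin d → ℤ)) : Prop :=
  2 ≤ p.length ∧ (∀ i, i + 1 < p.length → lone (p.getD (i + 1) 0 - p.getD i 0) = 1) ∧
    lone (p.getD 0 0 - p.getD (p.length - 1) 0) = 1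

/-- The based-loop measure `μ̇((x₁,…,x_n)) = (1/n)·(1/(2d))^n`, as an `ℝ≥0`. -/
noncomputable def loopWeight {d : ℕ} (p : List (Fin d → ℤ)) : ℝ≥0 :=
  ((p.length : ℝ≥0))⁻¹ * ((2 * d : ℝ≥0))⁻¹ ^ p.length

/-- The vacant set of a loop configuration `N` (occupation numbers of based loops): vertices
visited by no loop present in the configuration. -/
def vacantSet {d : ℕ} (N : List (Fin d → ℤ) → ℕ) : Set (Fin d → ℤ) :=
  {x | ∀ p, IsBasedLoop p → 0 < N p → x ∉ p}

/-- The `{0,1}`-valued vacancy field of a configuration. -/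
noncomputable def vacField {d : ℕ} (N : List (Fin d → ℤ) → ℕ) : (Fin d → ℤ) → Bool :=
  fun x => if x ∈ vacantSet N then true else false


/-!
Fix a unit vector `e`. A vertex `x` can only be vacant if neither of the two length-2 based
loops `[x, x + e]` and `[x + e, x]` occurs. Each is absent with probability
`exp(-α/(8d²))`, independently, so the indicator `B x` of "both absent" is a
Bernoulli(`exp(-α/(4d²))`) variable. Distinct vertices use disjoint pairs of loops, so `B` is an
i.i.d. Bernoulli field: it has the law of `η` and dominates the vacancy field pointwise.
-/

namespace ProbabilityTheory

variable {Ω Ω' : Type*} [MeasurableSpace Ω] [MeasurableSpace Ω'] {P : Measure Ω} {P' : Measure Ω'}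

lemma iIndepFun.curry {ι κ 𝓧 : Type*} [MeasurableSpace 𝓧] {X : ι → κ → Ω → 𝓧}
    (mX : ∀ i j, Measurable (X i j)) (h : iIndepFun (fun p : ι × κ ↦ X p.1 p.2) P) :
    iIndepFun (fun i ω j ↦ X i j ω) P := by
  have := h.isProbabilityMeasure
  have (i : ι) (j : κ) := Measure.isProbabilityMeasure_map (μ := P) (mX i j).aemeasurable
  have hrow (i : ι) : P.map (fun ω j ↦ X i j ω) = Measure.infinitePi (fun j ↦ P.map (X i j)) :=
    (h.precomp (Prod.mk_right_injective i)).map_fun_eq_infinitePi_map (mX i)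
  have hall : P.map (fun ω (p : ι × κ) ↦ X p.1 p.2 ω) =
      Measure.infinitePi (fun p : ι × κ ↦ P.map (X p.1 p.2)) :=
    h.map_fun_eq_infinitePi_map fun p ↦ mX p.1 p.2
  rw [iIndepFun_iff_map_fun_eq_infinitePi_map (fun i ↦ measurable_pi_lambda _ (mX i))]
  simp_rw [hrow]
  rw [← Measure.infinitePi_map_curry, ← hall,
    Measure.map_map (MeasurableEquiv.curry ι κ 𝓧).measurable
    (measurable_pi_lambda _ fun p ↦ mX p.1 p.2)]
  rfl

lemma _root_.MeasureTheory.Measure.eq_of_apply_singleton_true {μ ν : Measure Bool}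
    [IsProbabilityMeasure μ] [IsProbabilityMeasure ν] (h : μ {true} = ν {true}) : μ = ν := by
  have hfalse : ({false} : Set Bool) = {true}ᶜ := by ext b; simp
  refine Measure.ext_of_singleton fun b ↦ ?_
  cases b
  · rw [hfalse, prob_compl_eq_one_sub (measurableSet_singleton _),
      prob_compl_eq_one_sub (measurableSet_singleton _), h]
  · exact h

lemma iIndepFun.map_eq_of_measure_preimage_true {ι : Type*} {X : ι → Ω → Bool}
    {Y : ι → Ω' → Bool} (mX : ∀ i, Measurable (X i)) (mY : ∀ i, Measurable (Y i))
    (hX : iIndepFun X P) (hY : iIndepFun Y P')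
    (h : ∀ i, P (X i ⁻¹' {true}) = P' (Y i ⁻¹' {true})) :
    P.map (fun ω i ↦ X i ω) = P'.map (fun ω i ↦ Y i ω) := by
  have := hX.isProbabilityMeasure
  have := hY.isProbabilityMeasure
  rw [hX.map_fun_eq_infinitePi_map mX, hY.map_fun_eq_infinitePi_map mY]
  congr 1
  funext i
  have := Measure.isProbabilityMeasure_map (μ := P) (mX i).aemeasurable
  have := Measure.isProbabilityMeasure_map (μ := P') (mY i).aemeasurable
  refine Measure.eq_of_apply_singleton_true ?_
  rw [Measure.map_apply (mX i) (measurableSet_singleton _),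
    Measure.map_apply (mY i) (measurableSet_singleton _), h i]

lemma measure_preimage_le_of_le_of_map_eq {β : Type*} [Preorder β] [MeasurableSpace β]
    {F G : Ω → β} {H : Ω' → β} (hFG : ∀ ω, F ω ≤ G ω) (hG : Measurable G) (hH : Measurable H)
    (hGH : P.map G = P'.map H) {E : Set β} (hE : MeasurableSet E) (hEu : IsUpperSet E) :
    P (F ⁻¹' E) ≤ P' (H ⁻¹' E) :=
  calc P (F ⁻¹' E) ≤ P (G ⁻¹' E) := measure_mono fun ω hω ↦ hEu (hFG ω) hω
    _ = P' (H ⁻¹' E) := by rw [← Measure.map_apply hG hE, hGH, Measure.map_apply hH hE]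

lemma measure_preimage_zero_of_map_eq_poissonMeasure {X : Ω → ℕ} {r : ℝ≥0} (hX : Measurable X)
    (h : P.map X = poissonMeasure r) : P (X ⁻¹' {0}) = ENNReal.ofReal (Real.exp (-r)) := by
  rw [← Measure.map_apply hX (measurableSet_singleton 0), h, poissonMeasure_singleton]
  simp

end ProbabilityTheory

section LoopSoup

variable {d : ℕ}

lemma lone_neg (x : Fin d → ℤ) : lone (-x) = lone x := by
  simp [lone]

lemma lone_sub_comm (x y : Fin d → ℤ) : lone (x - y) = lone (y - x) := by
  rw [← neg_sub, lone_neg]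

lemma ne_zero_of_lone_eq_one {e : Fin d → ℤ} (he : lone e = 1) : e ≠ 0 := by
  rintro rfl
  simp [lone] at he

lemma exists_lone_eq_one (hd : 0 < d) : ∃ e : Fin d → ℤ, lone e = 1 :=
  ⟨Pi.single ⟨0, hd⟩ 1, by simp [lone, Pi.single_apply, apply_ite Int.natAbs]⟩

lemma isBasedLoop_pair {a b : Fin d → ℤ} (h : lone (b - a) = 1) : IsBasedLoop [a, b] := by
  refine ⟨le_rfl, fun i hi ↦ ?_, by simpa [lone_sub_comm a b] using h⟩
  obtain rfl : i = 0 := by simpa using hi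
  exact h

lemma loopWeight_pair (a b : Fin d → ℤ) : loopWeight [a, b] = (8 * (d : ℝ≥0) ^ 2)⁻¹ := by
  simp only [loopWeight, List.length_cons, List.length_nil]
  push_cast
  rw [mul_inv, mul_pow, mul_inv, inv_pow, inv_pow, ← mul_assoc]
  norm_num

def edgeLoop (e x : Fin d → ℤ) : Bool → List (Fin d → ℤ)
  | false => [x, x + e]
  | true => [x + e, x]

variable {e : Fin d → ℤ}

lemma isBasedLoop_edgeLoop (he : lone e = 1) (x : Fin d → ℤ) (b : Bool) :
    IsBasedLoop (edgeLoop e x b) := by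
  cases b
  · exact isBasedLoop_pair (by simpa using he)
  · exact isBasedLoop_pair (by simpa [lone_neg] using he)

lemma mem_edgeLoop (x : Fin d → ℤ) (b : Bool) : x ∈ edgeLoop e x b := by
  cases b <;> simp [edgeLoop]

lemma loopWeight_edgeLoop (x : Fin d → ℤ) (b : Bool) :
    loopWeight (edgeLoop e x b) = (8 * (d : ℝ≥0) ^ 2)⁻¹ := by
  cases b <;> exact loopWeight_pair _ _

lemma edgeLoop_false_ne_true (he : e ≠ 0) (x y : Fin d → ℤ) :
    edgeLoop e x false ≠ edgeLoop e y true := by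
  simp only [edgeLoop, ne_eq, List.cons.injEq, and_true, not_and]
  rintro rfl h
  rw [add_assoc, add_eq_left, ← two_nsmul] at h
  exact he ((smul_eq_zero.1 h).resolve_left two_ne_zero)

lemma edgeLoop_injective (he : e ≠ 0) :
    Function.Injective fun p : (Fin d → ℤ) × Bool ↦ edgeLoop e p.1 p.2 := by
  rintro ⟨x, _ | _⟩ ⟨y, _ | _⟩ h
  · simpa [edgeLoop] using h
  · exact absurd h (edgeLoop_false_ne_true he x y)
  · exact absurd h.symm (edgeLoop_false_ne_true he y x)
  · simpa [edgeLoop] using h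

def edgeVacancy (e : Fin d → ℤ) (N : List (Fin d → ℤ) → ℕ) (x : Fin d → ℤ) : Bool :=
  decide (∀ b, N (edgeLoop e x b) = 0)

lemma vacField_le_edgeVacancy (he : lone e = 1) (N : List (Fin d → ℤ) → ℕ) (x : Fin d → ℤ) :
    vacField N x ≤ edgeVacancy e N x := by
  by_cases hx : x ∈ vacantSet N
  · have hzero (b : Bool) : N (edgeLoop e x b) = 0 :=
      Nat.eq_zero_of_not_pos fun hpos ↦ hx _ (isBasedLoop_edgeLoop he x b) hpos (mem_edgeLoop x b)
    simp [edgeVacancy, hzero]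
  · simp [vacField, hx]

variable {Ω : Type*} [MeasurableSpace Ω] {P : Measure Ω} {N : List (Fin d → ℤ) → Ω → ℕ}

lemma measurable_edgeVacancy (hN : ∀ p, Measurable (N p)) (x : Fin d → ℤ) :
    Measurable fun ω ↦ edgeVacancy e (fun p ↦ N p ω) x :=
  (measurable_of_countable fun v : Bool → ℕ ↦ decide (∀ b, v b = 0)).comp
    (measurable_pi_lambda _ fun b ↦ hN (edgeLoop e x b))

lemma iIndepFun_edgeVacancy (he : e ≠ 0) (hN : ∀ p, Measurable (N p)) (hind : iIndepFun N P) :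
    iIndepFun (fun x ω ↦ edgeVacancy e (fun p ↦ N p ω) x) P :=
  ((hind.precomp (edgeLoop_injective he)).curry fun x b ↦ hN (edgeLoop e x b)).comp
    (fun _ v ↦ decide (∀ b, v b = 0)) fun _ ↦ measurable_of_countable _

lemma measure_edgeVacancy_true (he : lone e = 1) {α : ℝ≥0} (hN : ∀ p, Measurable (N p))
    (hind : iIndepFun N P)
    (hdist : ∀ p, IsBasedLoop p → P.map (N p) = poissonMeasure (α * loopWeight p))
    (x : Fin d → ℤ) :
    P ((fun ω ↦ edgeVacancy e (fun p ↦ N p ω) x) ⁻¹' {true}) =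
      ENNReal.ofReal (Real.exp (-(α : ℝ) / (4 * d ^ 2))) := by
  have hzero (b : Bool) : P (N (edgeLoop e x b) ⁻¹' {0}) =
      ENNReal.ofReal (Real.exp (-(α : ℝ) / (8 * d ^ 2))) := by
    rw [measure_preimage_zero_of_map_eq_poissonMeasure (hN _)
      (hdist _ (isBasedLoop_edgeLoop he x b)), loopWeight_edgeLoop]
    push_cast
    ring_nf
  have hset : (fun ω ↦ edgeVacancy e (fun p ↦ N p ω) x) ⁻¹' {true} =
      N (edgeLoop e x false) ⁻¹' {0} ∩ N (edgeLoop e x true) ⁻¹' {0} := by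
    ext ω
    simp [edgeVacancy, Bool.forall_bool]
  have hne : edgeLoop e x false ≠ edgeLoop e x true :=
    edgeLoop_false_ne_true (ne_zero_of_lone_eq_one he) x x
  rw [hset, (hind.indepFun hne).measure_inter_preimage_eq_mul _ _ (measurableSet_singleton 0)
    (measurableSet_singleton 0), hzero, hzero, ← ENNReal.ofReal_mul (Real.exp_nonneg _),
    ← Real.exp_add]
  ring_nf

end LoopSoup

theorem vacant_set_dominated_by_bernoulli_general (d : ℕ) (hd : 3 ≤ d) (α : ℝ≥0)
    {Ω : Type*} [MeasurableSpace Ω] (μpr : Measure Ω) [IsProbabilityMeasure μpr]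
    (N : List (Fin d → ℤ) → Ω → ℕ)
    (hNmeas : ∀ p, Measurable (N p))
    (hNindep : iIndepFun N μpr)
    (hNdist : ∀ p, IsBasedLoop p →
      Measure.map (N p) μpr = poissonMeasure (α * loopWeight p))
    {Ω' : Type*} [MeasurableSpace Ω'] (μpr' : Measure Ω') [IsProbabilityMeasure μpr']
    (η : (Fin d → ℤ) → Ω' → Bool)
    (hηmeas : ∀ x, Measurable (η x))
    (hηindep : iIndepFun η μpr')
    (hηdist : ∀ x, μpr' {ω' | η x ω' = true}
      = ENNReal.ofReal (Real.exp (-(α : ℝ) / (4 * d ^ 2)))) :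
    (∀ x : Fin d → ℤ, μpr {ω | x ∈ vacantSet (fun p => N p ω)}
        ≤ ENNReal.ofReal (Real.exp (-(α : ℝ) / (4 * d ^ 2)))) ∧
      ∀ E : Set ((Fin d → ℤ) → Bool), MeasurableSet E →
        (∀ f g : (Fin d → ℤ) → Bool, (∀ x, f x ≤ g x) → f ∈ E → g ∈ E) →
        μpr {ω | vacField (fun p => N p ω) ∈ E} ≤ μpr' {ω' | (fun x => η x ω') ∈ E} := by
  obtain ⟨e, he⟩ := exists_lone_eq_one (by omega : 0 < d)
  have hindep := iIndepFun_edgeVacancy (ne_zero_of_lone_eq_one he) hNmeas hNindep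
  have hlaw : μpr.map (fun ω x ↦ edgeVacancy e (fun p ↦ N p ω) x) =
      μpr'.map (fun ω' x ↦ η x ω') :=
    hindep.map_eq_of_measure_preimage_true (measurable_edgeVacancy hNmeas) hηmeas hηindep
      fun x ↦ (measure_edgeVacancy_true he hNmeas hNindep hNdist x).trans (hηdist x).symm
  have hdom (E : Set ((Fin d → ℤ) → Bool)) (hE : MeasurableSet E) (hEu : IsUpperSet E) :
      μpr {ω | vacField (fun p ↦ N p ω) ∈ E} ≤ μpr' {ω' | (fun x ↦ η x ω') ∈ E} :=
    measure_preimage_le_of_le_of_map_eq (fun ω x ↦ vacField_le_edgeVacancy he _ x)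
      (measurable_pi_lambda _ (measurable_edgeVacancy hNmeas)) (measurable_pi_lambda _ hηmeas)
      hlaw hE hEu
  refine ⟨fun x ↦ ?_, fun E hE hmono ↦ hdom E hE fun f g hfg ↦ hmono f g hfg⟩
  calc μpr {ω | x ∈ vacantSet (fun p ↦ N p ω)}
      = μpr {ω | vacField (fun p ↦ N p ω) ∈ {f | f x = true}} := by simp [vacField]
    _ ≤ μpr' {ω' | η x ω' = true} :=
      hdom _ (measurableSet_setOfPred.2 (by fun_prop))
        fun f g hfg hf ↦ Bool.eq_true_of_true_le (hf ▸ hfg x)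
    _ = ENNReal.ofReal (Real.exp (-(α : ℝ) / (4 * d ^ 2))) := hηdist x

/-- The vacant set `V^α` of the random walk loop soup at intensity `α` (realized as independent
Poisson occupation numbers `N p` with mean `α μ̇(p)` on the countable space of based loops) is
stochastically dominated by Bernoulli site percolation with parameter `exp(−α/(4d²))`: for every
increasing measurable event `E` of fields and any iid Bernoulli(`exp(−α/(4d²))`) field `η`,
`P[1_{V^α} ∈ E] ≤ P'[η ∈ E]`; in particular `P[x ∈ V^α] ≤ exp(−α/(4d²))` for every `x`. -/
theorem vacant_set_dominated_by_bernoulli (d : ℕ) (hd : 3 ≤ d) (α : ℝ≥0) (hα : 0 < α)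
    {Ω : Type*} [MeasurableSpace Ω] (μpr : Measure Ω) [IsProbabilityMeasure μpr]
    (N : List (Fin d → ℤ) → Ω → ℕ)
    (hNmeas : ∀ p, Measurable (N p))
    (hNindep : iIndepFun N μpr)
    (hNdist : ∀ p, IsBasedLoop p →
      Measure.map (N p) μpr = poissonMeasure (α * loopWeight p))
    (hNzero : ∀ p, ¬ IsBasedLoop p → ∀ ω, N p ω = 0)
    {Ω' : Type*} [MeasurableSpace Ω'] (μpr' : Measure Ω') [IsProbabilityMeasure μpr']
    (η : (Fin d → ℤ) → Ω' → Bool)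
    (hηmeas : ∀ x, Measurable (η x))
    (hηindep : iIndepFun η μpr')
    (hηdist : ∀ x, μpr' {ω' | η x ω' = true}
      = ENNReal.ofReal (Real.exp (-(α : ℝ) / (4 * d ^ 2)))) :
    (∀ x : Fin d → ℤ, μpr {ω | x ∈ vacantSet (fun p => N p ω)}
        ≤ ENNReal.ofReal (Real.exp (-(α : ℝ) / (4 * d ^ 2)))) ∧
      ∀ E : Set ((Fin d → ℤ) → Bool), MeasurableSet E →
        (∀ f g : (Fin d → ℤ) → Bool, (∀ x, f x ≤ g x) → f ∈ E → g ∈ E) →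
        μpr {ω | vacField (fun p => N p ω) ∈ E} ≤ μpr' {ω' | (fun x => η x ω') ∈ E} :=
  vacant_set_dominated_by_bernoulli_general d hd α μpr N hNmeas hNindep hNdist μpr' η hηmeas hηindep
    hηdist
end

section
/- Abstract decoupling-to-cascading bound (Theorem 6.1 of the paper, increasing case): Let (P^u)_{u∈(a,b)} be a family of probability measures on {0,1}^{Z^d} satisfying: there exist β, γ, ζ > 0 and constants C, c such that for all L, s ≥ 1, x₁, x₂ with ‖x₁−x₂‖ = sL, u < u' in (a,b), and increasing events A_i depending only on coordinates in B(x_i, L), one has P^u[A₁ ∩ A₂] ≤ P^{u'}[A₁]·P^{u'}[A₂] + C·exp(−c·min{(u'−u)^β s^γ, e^{(log L)^ζ}}). Fix θ > 1 with (θ+1)ζ > 1 and scales l_k = l₀4^{⌊k^θ⌋}, r_k = r₀2^{⌊k^θ⌋}, L_{k+1} = l_k L_k. Let seeds Ḡ_x (x ∈ L₀Z^d) be increasing events depending on coordinates in x + [−L₀, 3L₀)^d with lim_{L₀→∞} sup_x P^{u'}[Ḡ_x] = 0, and define cascading events Ḡ_{x,k+1} = ∪ Ḡ_{x₁,k} ∩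 Ḡ_{x₂,k} over pairs x₁, x₂ in the box Λ_{x,k+1} of the k-th lattice with ‖x₁−x₂‖ > r_k L_k. Then for every u ∈ (a, u') there is C(u,u') such that for all l₀ ≥ 1, r₀ ≥ C(1+log l₀)^{2/γ}, and all sufficiently large L₀: sup_{x∈L_kZ^d} P^u[Ḡ_{x,k}] ≤ 2^{−2^k} for all k ≥ 0. -/
/-!
Along the parameters `u_k = u + (u' - u) 2^{-(k+1)}` one proves by induction on `k` that
`P^{u_k}[G_{x,k}] ≤ 2^{-e_k}`, where `e_k = B + ∑_{j<k} ⌊j^θ⌋ + 2^{k+1}` and `B ≈ 2d log₂ l₀`.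
The event `G_{x,k+1}` is the union of at most `l_k^{2d}` events `G_{x₁,k} ∩ G_{x₂,k}` whose
factors live on `3L_k`-balls more than `r_k L_k` apart, and decoupling between `u_{k+1}` and `u_k`
bounds each of them by `2^{-2e_k}` plus an error. Squaring gains more halvings than the union
bound loses because `∑_{j<k} ⌊j^θ⌋` outgrows `⌊k^θ⌋`. The error has to be below
`2^{-O((1 + log l₀) 2^k)}`; it is, because `r_k^γ ≈ 2^{γ k^θ}` beats the gap
`(u_k - u_{k+1})^β ≈ 2^{-kβ}` once `r₀ ≳ (1 + log l₀)^{2/γ}`, and because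
`(log L_k)^ζ ≳ k^{(θ+1)ζ}` outgrows `k` once `L₀` is large. The base case is the seed bound at
`u'`, carried down to `u₀ < u'` by monotonicity, which is itself decoupling against the sure
event at a large distance.
-/

open MeasureTheory Filter
open scoped ENNReal Topology

/-- Configuration space `{0,1}^{ℤ^d}`. -/
abbrev Config (d : ℕ) := (Fin d → ℤ) → Bool

/-- An increasing event. -/
def IncrEvent {d : ℕ} (E : Set (Config d)) : Prop :=
  ∀ ω ω' : Config d, (∀ x, ω x ≤ ω' x) → ω ∈ E → ω' ∈ E

/-- `E` depends only on the coordinates in `s`. -/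
def DepOn {d : ℕ} (E : Set (Config d)) (s : Set (Fin d → ℤ)) : Prop :=
  ∀ ω ω' : Config d, (∀ x ∈ s, ω x = ω' x) → (ω ∈ E ↔ ω' ∈ E)

/-- The renormalized lattice `L·ℤ^d`. -/
def latticeZ (d L : ℕ) : Set (Fin d → ℤ) := {x | ∀ i, (L : ℤ) ∣ x i}

/-- The box `Λ_{x,k+1} = G_k ∩ (x + [0, L_{k+1})^d)` (here `Lk` is `L_k`, `Lk1 = L_{k+1}`). -/
def boxLam {d : ℕ} (x : Fin d → ℤ) (Lk Lk1 : ℕ) : Set (Fin d → ℤ) :=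
  {y ∈ latticeZ d Lk | ∀ i, x i ≤ y i ∧ y i < x i + (Lk1 : ℤ)}


open Real

lemma linf_le_iff {d : ℕ} {v : Fin d → ℤ} {n : ℕ} :
    linf v ≤ n ↔ ∀ i, (v i).natAbs ≤ n := by
  simp [linf, Finset.sup_le_iff]

lemma natAbs_le_linf {d : ℕ} (v : Fin d → ℤ) (i : Fin d) : (v i).natAbs ≤ linf v :=
  Finset.le_sup (f := fun i => (v i).natAbs) (Finset.mem_univ i)

lemma exists_natAbs_eq_linf {d : ℕ} {v : Fin d → ℤ} (hv : 0 < linf v) :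
    ∃ i, (v i).natAbs = linf v := by
  have hne : (Finset.univ : Finset (Fin d)).Nonempty := by
    by_contra h
    simp [Finset.not_nonempty_iff_eq_empty.1 h, linf] at hv
  obtain ⟨i, -, hi⟩ := Finset.exists_mem_eq_sup _ hne fun i => (v i).natAbs
  exact ⟨i, hi.symm⟩

lemma linf_single {d : ℕ} (i : Fin d) (m : ℤ) : linf (Pi.single i m) = m.natAbs := by
  refine le_antisymm (linf_le_iff.2 fun j => ?_) (by simpa using natAbs_le_linf (Pi.single i m) i)
  rcases eq_or_ne j i with rfl | hj
  · simp
  · simp [hj]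

lemma natAbs_add_sign_mul {w : ℤ} (hw : w ≠ 0) (c : ℕ) :
    (w + w.sign * c).natAbs = w.natAbs + c := by
  rcases hw.lt_or_gt with h | h
  · rw [Int.sign_eq_neg_one_of_neg h]; omega
  · rw [Int.sign_eq_one_of_pos h]; omega

lemma natAbs_sign_mul_le (w : ℤ) (c : ℕ) : (w.sign * c).natAbs ≤ c := by
  rcases Int.sign_trichotomy w with h | h | h <;> simp [h]

/-- Moving `x₁` and `x₂` apart by at most `3L` along one coordinate makes their distance an exact
multiple of `6L`, as the decoupling inequality requires. -/
lemma exists_linf_eq_mul {d : ℕ} {L r : ℕ} (hL : 0 < L) {x₁ x₂ : Fin d → ℤ}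
    (hfar : r * L < linf (x₁ - x₂)) :
    ∃ (y₁ y₂ : Fin d → ℤ) (s : ℕ), 1 ≤ s ∧ r ≤ 6 * s ∧ linf (y₁ - y₂) = s * (6 * L) ∧
      (∀ i, (y₁ i - x₁ i).natAbs ≤ 3 * L) ∧ (∀ i, (y₂ i - x₂ i).natAbs ≤ 3 * L) := by
  set v := x₁ - x₂
  set s := linf v / (6 * L) + 1
  have hs : linf v < s * (6 * L) ∧ s * (6 * L) ≤ linf v + 6 * L := by
    rw [add_one_mul]
    exact ⟨Nat.lt_div_mul_add (by omega), Nat.add_le_add_right (Nat.div_mul_le_self _ _) _⟩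
  obtain ⟨i₀, hi₀⟩ := exists_natAbs_eq_linf (v := v) (by omega)
  have hv₀ : v i₀ ≠ 0 := by rintro h; rw [h, Int.natAbs_zero] at hi₀; omega
  set c := s * (6 * L) - linf v
  set c₁ := min c (3 * L)
  set c₂ := c - c₁
  set σ := (v i₀).sign
  have hdiff : x₁ + Pi.single i₀ (σ * c₁) - (x₂ - Pi.single i₀ (σ * c₂)) =
      v + Pi.single i₀ (σ * c) := by
    have hc : (c₁ : ℤ) + c₂ = c := by omega
    ext i
    rcases eq_or_ne i i₀ with rfl | hi
    · simp only [v, Pi.add_apply, Pi.sub_apply, Pi.single_eq_same, ← hc]; ring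
    · simp [v, hi]
  refine ⟨x₁ + Pi.single i₀ (σ * c₁), x₂ - Pi.single i₀ (σ * c₂), s, Nat.succ_pos _,
    ?_, ?_, fun i => ?_, fun i => ?_⟩
  · have : r * L < 6 * s * L := by
      calc r * L < linf v := hfar
        _ < s * (6 * L) := hs.1
        _ = 6 * s * L := by ring
    exact (Nat.lt_of_mul_lt_mul_right this).le
  · have hi₀c : ((v + Pi.single i₀ (σ * c) : Fin d → ℤ) i₀).natAbs = s * (6 * L) := by
      simp only [Pi.add_apply, Pi.single_eq_same, σ, natAbs_add_sign_mul hv₀, hi₀]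
      omega
    rw [hdiff]
    refine le_antisymm (linf_le_iff.2 fun i => ?_) (hi₀c ▸ natAbs_le_linf _ i₀)
    rcases eq_or_ne i i₀ with rfl | hi
    · exact hi₀c.le
    · simp only [Pi.add_apply, Pi.single_eq_of_ne hi, add_zero]
      exact (natAbs_le_linf v i).trans hs.1.le
  · rcases eq_or_ne i i₀ with rfl | hi
    · simpa using (natAbs_sign_mul_le _ c₁).trans (min_le_right _ _)
    · simp [hi]
  · rcases eq_or_ne i i₀ with rfl | hi
    · simpa using (natAbs_sign_mul_le _ c₂).trans (by omega)
    · simp [hi]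

lemma setOf_linf_sub_le_subset {d : ℕ} {x y : Fin d → ℤ} {m n : ℕ}
    (hxy : ∀ i, (y i - x i).natAbs ≤ n) :
    {z | linf (z - x) ≤ m} ⊆ {z | linf (z - y) ≤ m + n} := fun z (hz : linf (z - x) ≤ m) =>
  linf_le_iff.2 fun i => by
    have := (linf_le_iff.1 hz) i
    have := hxy i
    simp only [Pi.sub_apply] at *
    omega

section Events

variable {d : ℕ}

lemma DepOn.mono {E : Set (Config d)} {s s' : Set (Fin d → ℤ)} (h : DepOn E s) (hss : s ⊆ s') :
    DepOn E s' :=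
  fun ω ω' hag => h ω ω' fun x hx => hag x (hss hx)

lemma DepOn.inter {E F : Set (Config d)} {s : Set (Fin d → ℤ)} (hE : DepOn E s)
    (hF : DepOn F s) : DepOn (E ∩ F) s := fun ω ω' hag => by
  simp only [Set.mem_inter_iff, hE ω ω' hag, hF ω ω' hag]

lemma DepOn.iUnion {ι : Sort*} {E : ι → Set (Config d)} {s : Set (Fin d → ℤ)}
    (h : ∀ i, DepOn (E i) s) : DepOn (⋃ i, E i) s := fun ω ω' hag => by
  simp only [Set.mem_iUnion, h _ ω ω' hag]

lemma depOn_univ (s : Set (Fin d → ℤ)) : DepOn (Set.univ : Set (Config d)) s :=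
  fun _ _ _ => Iff.rfl

lemma IncrEvent.inter {E F : Set (Config d)} (hE : IncrEvent E) (hF : IncrEvent F) :
    IncrEvent (E ∩ F) := fun ω ω' h hm => ⟨hE ω ω' h hm.1, hF ω ω' h hm.2⟩

lemma IncrEvent.iUnion {ι : Sort*} {E : ι → Set (Config d)} (h : ∀ i, IncrEvent (E i)) :
    IncrEvent (⋃ i, E i) := fun ω ω' hle hm => by
  obtain ⟨i, hi⟩ := Set.mem_iUnion.1 hm
  exact Set.mem_iUnion.2 ⟨i, h i ω ω' hle hi⟩

lemma incrEvent_univ : IncrEvent (Set.univ : Set (Config d)) := fun _ _ _ _ => trivial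

end Events

/-- The decoupling inequality **D**(a). -/
def DecouplingIneq {d : ℕ} (P : ℝ → Measure (Config d)) (a b β γ ζ Cd cd : ℝ) : Prop :=
  ∀ L s : ℕ, 1 ≤ L → 1 ≤ s → ∀ x₁ x₂ : Fin d → ℤ, linf (x₁ - x₂) = s * L →
    ∀ u u' : ℝ, a < u → u < u' → u' < b →
      ∀ A₁ A₂ : Set (Config d), IncrEvent A₁ → IncrEvent A₂ →
        DepOn A₁ {y | linf (y - x₁) ≤ L} → DepOn A₂ {y | linf (y - x₂) ≤ L} →
        (P u (A₁ ∩ A₂)).toReal ≤ (P u' A₁).toReal * (P u' A₂).toReal +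
          Cd * exp (-cd * min ((u' - u) ^ β * (s : ℝ) ^ γ) (exp ((log L) ^ ζ)))

namespace DecouplingIneq

variable {d : ℕ} {P : ℝ → Measure (Config d)} {a b β γ ζ Cd cd : ℝ}

/-- Decoupling against the sure event at ever larger distances, where the error vanishes. -/
theorem measure_mono (hdec : DecouplingIneq P a b β γ ζ Cd cd) (hd : 1 ≤ d) (hγ : 0 < γ)
    (hζ : 0 < ζ) (hcd : 0 < cd) {u₁ u₂ : ℝ} (h₁ : a < u₁) (h₁₂ : u₁ < u₂) (h₂ : u₂ < b)
    [IsProbabilityMeasure (P u₁)] [IsProbabilityMeasure (P u₂)] {A : Set (Config d)}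
    (hA : IncrEvent A) {x₀ : Fin d → ℤ} {ρ : ℕ} (hdep : DepOn A {y | linf (y - x₀) ≤ ρ}) :
    P u₁ A ≤ P u₂ A := by
  rw [← ENNReal.toReal_le_toReal (measure_ne_top _ _) (measure_ne_top _ _)]
  set err : ℕ → ℝ := fun n => Cd * exp (-cd * min ((u₂ - u₁) ^ β * (n : ℝ) ^ γ)
    (exp ((log n) ^ ζ)))
  have hbound : ∀ n, max ρ 1 ≤ n → (P u₁ A).toReal ≤ (P u₂ A).toReal + err n := by
    intro n hn
    have hfar : linf (x₀ - (x₀ - Pi.single ⟨0, hd⟩ ((n * n : ℕ) : ℤ))) = n * n := by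
      rw [sub_sub_cancel, linf_single, Int.natAbs_natCast]
    have h := hdec n n (by omega) (by omega) _ _ hfar u₁ u₂ h₁ h₁₂ h₂ A Set.univ hA
      incrEvent_univ (hdep.mono fun y (hy : linf (y - x₀) ≤ ρ) => hy.trans (by omega))
      (depOn_univ _)
    simpa [err] using h
  have hmin : Tendsto (fun n : ℕ => min ((u₂ - u₁) ^ β * (n : ℝ) ^ γ)
      (exp ((log n) ^ ζ))) atTop atTop := by
    have h1 : Tendsto (fun n : ℕ => (u₂ - u₁) ^ β * (n : ℝ) ^ γ) atTop atTop :=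
      ((tendsto_rpow_atTop hγ).comp tendsto_natCast_atTop_atTop).const_mul_atTop
        (rpow_pos_of_pos (by linarith) β)
    have h2 : Tendsto (fun n : ℕ => exp ((log n) ^ ζ)) atTop atTop :=
      Real.tendsto_exp_atTop.comp ((tendsto_rpow_atTop hζ).comp
        (tendsto_log_atTop.comp tendsto_natCast_atTop_atTop))
    exact tendsto_atTop.2 fun X =>
      ((tendsto_atTop.1 h1 X).and (tendsto_atTop.1 h2 X)).mono fun n h => le_min h.1 h.2
  have herr : Tendsto err atTop (𝓝 0) := by
    simpa only [err, Function.comp_def, neg_mul, mul_zero] using (Real.tendsto_exp_atBot.comp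
      (tendsto_neg_atTop_atBot.comp (hmin.const_mul_atTop hcd))).const_mul Cd
  refine ge_of_tendsto (by simpa using herr.const_add (P u₂ A).toReal) ?_
  exact eventually_atTop.2 ⟨max ρ 1, hbound⟩

/-- Recentre both balls by `exists_linf_eq_mul` and decouple at radius `6L`, distance `s · 6L`
with `6s ≥ r`. -/
theorem toReal_measure_inter_le (hdec : DecouplingIneq P a b β γ ζ Cd cd) (hγ : 0 < γ)
    (hCd : 0 ≤ Cd) (hcd : 0 ≤ cd) {L r : ℕ} (hL : 0 < L) {x₁ x₂ : Fin d → ℤ}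
    (hfar : r * L < linf (x₁ - x₂)) {u u' : ℝ} (hu : a < u) (huu' : u < u') (hu' : u' < b)
    {A₁ A₂ : Set (Config d)} (hA₁ : IncrEvent A₁) (hA₂ : IncrEvent A₂)
    (hdep₁ : DepOn A₁ {y | linf (y - x₁) ≤ 3 * L}) (hdep₂ : DepOn A₂ {y | linf (y - x₂) ≤ 3 * L}) :
    (P u (A₁ ∩ A₂)).toReal ≤ (P u' A₁).toReal * (P u' A₂).toReal +
      Cd * exp (-cd * min ((u' - u) ^ β * ((r : ℝ) / 6) ^ γ) (exp ((log (6 * L)) ^ ζ))) := by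
  obtain ⟨y₁, y₂, s, hs, hrs, hy, hy₁, hy₂⟩ := exists_linf_eq_mul hL hfar
  refine (hdec (6 * L) s (by omega) hs y₁ y₂ hy u u' hu huu' hu' A₁ A₂ hA₁ hA₂
    (hdep₁.mono ((setOf_linf_sub_le_subset hy₁).trans fun _ (h : _ ≤ 3 * L + 3 * L) =>
      show _ ≤ 6 * L by omega))
    (hdep₂.mono ((setOf_linf_sub_le_subset hy₂).trans fun _ (h : _ ≤ 3 * L + 3 * L) =>
      show _ ≤ 6 * L by omega))).trans ?_
  have hrs' : (r : ℝ) / 6 ≤ s := by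
    rw [div_le_iff₀ (by norm_num)]
    exact_mod_cast (by omega : r ≤ s * 6)
  push_cast
  simp only [neg_mul]
  gcongr

end DecouplingIneq

lemma measure_biUnion_finset_pairs_le {α ι : Type*} [MeasurableSpace α] (μ : Measure α)
    (s : Finset ι) (E : ι → ι → Set α) {q : ℝ≥0∞} (h : ∀ i ∈ s, ∀ j ∈ s, μ (E i j) ≤ q) :
    μ (⋃ i ∈ s, ⋃ j ∈ s, E i j) ≤ (s.card : ℝ≥0∞) ^ 2 * q :=
  calc μ (⋃ i ∈ s, ⋃ j ∈ s, E i j) ≤ ∑ i ∈ s, ∑ j ∈ s, μ (E i j) :=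
        (measure_biUnion_finset_le _ _).trans
          (Finset.sum_le_sum fun _ _ => measure_biUnion_finset_le _ _)
    _ ≤ ∑ _i ∈ s, ∑ _j ∈ s, q := Finset.sum_le_sum fun i hi => Finset.sum_le_sum (h i hi)
    _ = (s.card : ℝ≥0∞) ^ 2 * q := by simp [Finset.sum_const, nsmul_eq_mul, sq, mul_assoc]

section Boxes

variable {d : ℕ}

/-- `x + [-L, 3L)^d`: the seeds at scale `L` depend on it, and the cascade preserves this
shape (`IsCascade.depOn_localBox`). -/
def localBox (x : Fin d → ℤ) (L : ℕ) : Set (Fin d → ℤ) :=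
  {y | ∀ i, x i - (L : ℤ) ≤ y i ∧ y i < x i + 3 * (L : ℤ)}

lemma localBox_subset (x : Fin d → ℤ) (L : ℕ) : localBox x L ⊆ {y | linf (y - x) ≤ 3 * L} :=
  fun y hy => linf_le_iff.2 fun i => by
    have := hy i
    simp only [Pi.sub_apply]
    omega

lemma localBox_subset_localBox {x x₁ : Fin d → ℤ} {L L' : ℕ} (hLL' : L ∣ L') (hL' : 0 < L')
    (hx : x ∈ latticeZ d L') (hx₁ : x₁ ∈ boxLam x L L') : localBox x₁ L ⊆ localBox x L' := by
  intro y hy i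
  have hle : L ≤ L' := Nat.le_of_dvd hL' hLL'
  have hdvd : (L : ℤ) ∣ x i + L' - x₁ i := by
    rw [add_sub_right_comm]
    exact dvd_add (dvd_sub ((Int.natCast_dvd_natCast.2 hLL').trans (hx i)) (hx₁.1 i))
      (Int.natCast_dvd_natCast.2 hLL')
  -- `x₁ i < x i + L'` and `L` divides their difference, so they are at least `L` apart
  have hgap := Int.le_of_dvd (by have := (hx₁.2 i).2; omega) hdvd
  have := hy i
  have := hx₁.2 i
  omega

def boxFinset (x : Fin d → ℤ) (L l : ℕ) : Finset (Fin d → ℤ) :=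
  (Fintype.piFinset fun _ => Finset.range l).image fun t i => x i + L * t i

lemma card_boxFinset_le (x : Fin d → ℤ) (L l : ℕ) : (boxFinset x L l).card ≤ l ^ d :=
  Finset.card_image_le.trans (by simp)

lemma boxLam_subset_boxFinset {x : Fin d → ℤ} {L l : ℕ} (hL : 0 < L) (hx : x ∈ latticeZ d L) :
    boxLam x L (l * L) ⊆ boxFinset x L l := by
  intro y ⟨hy, hbox⟩
  have hcoord : ∀ i, ∃ m : ℕ, m < l ∧ y i = x i + L * m := by
    intro i
    obtain ⟨m, hm⟩ := dvd_sub (hy i) (hx i)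
    have hL' : (0 : ℤ) < L := by exact_mod_cast hL
    have hm0 : 0 ≤ m := by nlinarith [(hbox i).1]
    have hml : m < l := by
      have : (L : ℤ) * m < L * l := by push_cast at hbox; nlinarith [(hbox i).2]
      exact lt_of_mul_lt_mul_left this hL'.le
    exact ⟨m.toNat, by omega, by rw [Int.toNat_of_nonneg hm0]; linarith⟩
  choose t ht using hcoord
  simp only [boxFinset, Finset.coe_image, Set.mem_image, Finset.mem_coe, Fintype.mem_piFinset,
    Finset.mem_range]
  exact ⟨t, fun i => (ht i).1, funext fun i => ((ht i).2).symm⟩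

lemma latticeZ_subset_of_dvd {m n : ℕ} (h : m ∣ n) : latticeZ d n ⊆ latticeZ d m :=
  fun _ hx i => (Int.natCast_dvd_natCast.2 h).trans (hx i)

end Boxes

section Cascade

variable {d : ℕ}

def IsCascade (E : ℕ → (Fin d → ℤ) → Set (Config d)) (L r : ℕ → ℕ) : Prop :=
  ∀ k x, E (k + 1) x =
    ⋃ (x₁ ∈ boxLam x (L k) (L (k + 1))) (x₂ ∈ boxLam x (L k) (L (k + 1)))
      (_ : r k * L k < linf (x₁ - x₂)), E k x₁ ∩ E k x₂

variable {E : ℕ → (Fin d → ℤ) → Set (Config d)} {L r : ℕ → ℕ}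

theorem IsCascade.incrEvent (h : IsCascade E L r) (h₀ : ∀ x, IncrEvent (E 0 x)) :
    ∀ k x, IncrEvent (E k x) := by
  intro k
  induction k with
  | zero => exact h₀
  | succ k ih =>
    intro x
    rw [h]
    exact IncrEvent.iUnion fun x₁ => .iUnion fun _ => .iUnion fun x₂ => .iUnion fun _ =>
      .iUnion fun _ => (ih x₁).inter (ih x₂)

theorem IsCascade.depOn_localBox (h : IsCascade E L r) {l : ℕ → ℕ}
    (hl : ∀ k, L (k + 1) = l k * L k) (hpos : ∀ k, 0 < L k)
    (h₀ : ∀ x, DepOn (E 0 x) (localBox x (L 0))) :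
    ∀ k, ∀ x ∈ latticeZ d (L k), DepOn (E k x) (localBox x (L k)) := by
  have hdvd k : L k ∣ L (k + 1) := ⟨l k, by rw [hl, mul_comm]⟩
  intro k
  induction k with
  | zero => exact fun x _ => h₀ x
  | succ k ih =>
    intro x hx
    rw [h]
    exact DepOn.iUnion fun x₁ => .iUnion fun hx₁ => .iUnion fun x₂ => .iUnion fun hx₂ =>
      .iUnion fun _ =>
        ((ih x₁ hx₁.1).mono (localBox_subset_localBox (hdvd k) (hpos _) hx hx₁)).inter
          ((ih x₂ hx₂.1).mono (localBox_subset_localBox (hdvd k) (hpos _) hx hx₂))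

theorem IsCascade.measure_succ_le (h : IsCascade E L r) (μ : Measure (Config d)) {k l : ℕ}
    (hl : L (k + 1) = l * L k) (hpos : 0 < L k) {x : Fin d → ℤ} (hx : x ∈ latticeZ d (L k))
    {q : ℝ≥0∞} (hq : ∀ x₁ ∈ latticeZ d (L k), ∀ x₂ ∈ latticeZ d (L k),
      r k * L k < linf (x₁ - x₂) → μ (E k x₁ ∩ E k x₂) ≤ q) :
    μ (E (k + 1) x) ≤ ((l ^ d : ℕ) : ℝ≥0∞) ^ 2 * q := by
  classical
  set F := boxFinset x (L k) l
  have hcover : E (k + 1) x ⊆ ⋃ x₁ ∈ F, ⋃ x₂ ∈ F,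
      ⋃ (_ : x₁ ∈ latticeZ d (L k) ∧ x₂ ∈ latticeZ d (L k) ∧ r k * L k < linf (x₁ - x₂)),
        E k x₁ ∩ E k x₂ := by
    rw [h, hl]
    intro ω hω
    simp only [Set.mem_iUnion] at hω ⊢
    obtain ⟨x₁, hx₁, x₂, hx₂, hfar, hω⟩ := hω
    exact ⟨x₁, boxLam_subset_boxFinset hpos hx hx₁, x₂, boxLam_subset_boxFinset hpos hx hx₂,
      ⟨hx₁.1, hx₂.1, hfar⟩, hω⟩
  refine (measure_mono hcover).trans <|
    (measure_biUnion_finset_pairs_le μ F _ (q := q) fun x₁ _ x₂ _ => ?_).trans ?_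
  · rw [Set.iUnion_eq_if]
    split_ifs with hfar
    · exact hq x₁ hfar.1 x₂ hfar.2.1 hfar.2.2
    · simp
  · gcongr
    exact_mod_cast card_boxFinset_le x (L k) l

end Cascade

section Recursion

variable {d : ℕ} {P : ℝ → Measure (Config d)} {a b β γ ζ Cd cd : ℝ}
  {E : ℕ → (Fin d → ℤ) → Set (Config d)} {L r l : ℕ → ℕ}

theorem IsCascade.measure_mono (h : IsCascade E L r) (hdec : DecouplingIneq P a b β γ ζ Cd cd)
    (hd : 1 ≤ d) (hγ : 0 < γ) (hζ : 0 < ζ) (hcd : 0 < cd)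
    (hprob : ∀ u, a < u → u < b → IsProbabilityMeasure (P u))
    (hl : ∀ k, L (k + 1) = l k * L k) (hpos : ∀ k, 0 < L k)
    (h₀incr : ∀ x, IncrEvent (E 0 x)) (h₀dep : ∀ x, DepOn (E 0 x) (localBox x (L 0)))
    {k : ℕ} {x : Fin d → ℤ} (hx : x ∈ latticeZ d (L k)) {u₁ u₂ : ℝ} (h₁ : a < u₁)
    (h₁₂ : u₁ < u₂) (h₂ : u₂ < b) : P u₁ (E k x) ≤ P u₂ (E k x) :=
  have := hprob u₁ h₁ (h₁₂.trans h₂)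
  have := hprob u₂ (h₁.trans h₁₂) h₂
  hdec.measure_mono hd hγ hζ hcd h₁ h₁₂ h₂ (h.incrEvent h₀incr k x)
    ((h.depOn_localBox hl hpos h₀dep k x hx).mono (localBox_subset _ _))

theorem IsCascade.measure_le_of_recursion (h : IsCascade E L r)
    (hdec : DecouplingIneq P a b β γ ζ Cd cd) (hγ : 0 < γ) (hCd : 0 ≤ Cd) (hcd : 0 ≤ cd)
    (hprob : ∀ u, a < u → u < b → IsProbabilityMeasure (P u))
    (hl : ∀ k, L (k + 1) = l k * L k) (hpos : ∀ k, 0 < L k)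
    (h₀incr : ∀ x, IncrEvent (E 0 x)) (h₀dep : ∀ x, DepOn (E 0 x) (localBox x (L 0)))
    {v : ℕ → ℝ} (hva : ∀ k, a < v k) (hvb : ∀ k, v k < b) (hv : ∀ k, v (k + 1) < v k)
    {p : ℕ → ℝ} (hp : ∀ k, 0 ≤ p k)
    (hp₀ : ∀ x ∈ latticeZ d (L 0), P (v 0) (E 0 x) ≤ ENNReal.ofReal (p 0))
    (hstep : ∀ k, ((l k ^ d : ℕ) : ℝ) ^ 2 * (p k ^ 2 + Cd * exp (-cd *
      min ((v k - v (k + 1)) ^ β * ((r k : ℝ) / 6) ^ γ) (exp ((log (6 * L k)) ^ ζ))))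
        ≤ p (k + 1)) :
    ∀ k, ∀ x ∈ latticeZ d (L k), P (v k) (E k x) ≤ ENNReal.ofReal (p k) := by
  have hdvd k : L k ∣ L (k + 1) := ⟨l k, by rw [hl, mul_comm]⟩
  have hincr := h.incrEvent h₀incr
  have hdep := h.depOn_localBox hl hpos h₀dep
  intro k
  induction k with
  | zero => exact hp₀
  | succ k ih =>
    intro x hx
    have := hprob _ (hva (k + 1)) (hvb (k + 1))
    have := hprob _ (hva k) (hvb k)
    have ih' x hx := ENNReal.toReal_le_of_le_ofReal (hp k) (ih x hx)
    set err := Cd * exp (-cd * min ((v k - v (k + 1)) ^ β * ((r k : ℝ) / 6) ^ γ)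
      (exp ((log (6 * L k)) ^ ζ)))
    have hpair : ∀ x₁ ∈ latticeZ d (L k), ∀ x₂ ∈ latticeZ d (L k), r k * L k < linf (x₁ - x₂) →
        P (v (k + 1)) (E k x₁ ∩ E k x₂) ≤ ENNReal.ofReal (p k ^ 2 + err) := by
      intro x₁ hx₁ x₂ hx₂ hfar
      rw [ENNReal.le_ofReal_iff_toReal_le (measure_ne_top _ _) (by positivity)]
      refine (hdec.toReal_measure_inter_le hγ hCd hcd (hpos k) hfar (hva _) (hv k) (hvb k)
        (hincr k x₁) (hincr k x₂) ((hdep k x₁ hx₁).mono (localBox_subset _ _))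
        ((hdep k x₂ hx₂).mono (localBox_subset _ _))).trans (add_le_add_left ?_ _)
      rw [sq]
      exact mul_le_mul (ih' x₁ hx₁) (ih' x₂ hx₂) ENNReal.toReal_nonneg (hp k)
    refine (h.measure_succ_le (P (v (k + 1))) (hl k) (hpos k)
      (latticeZ_subset_of_dvd (hdvd k) hx) hpair).trans
        (le_of_eq_of_le ?_ (ENNReal.ofReal_le_ofReal (hstep k)))
    rw [ENNReal.ofReal_mul (by positivity), ENNReal.ofReal_pow (by positivity),
      ENNReal.ofReal_natCast]

end Recursion

/-- `⌊k^θ⌋`, the exponent in `l_k = l₀ 4^⌊k^θ⌋` and `r_k = r₀ 2^⌊k^θ⌋`. -/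
noncomputable def growth (θ : ℝ) (k : ℕ) : ℕ := ⌊(k : ℝ) ^ θ⌋₊

noncomputable def growthSum (θ : ℝ) (k : ℕ) : ℕ := ∑ j ∈ Finset.range k, growth θ j

section Growth

variable {θ : ℝ}

lemma growth_mono (hθ : 0 ≤ θ) : Monotone (growth θ) := fun _ _ h =>
  Nat.floor_mono (rpow_le_rpow (by positivity) (by exact_mod_cast h) hθ)

lemma growth_le (k : ℕ) : (growth θ k : ℝ) ≤ (k : ℝ) ^ θ := Nat.floor_le (by positivity)

lemma sub_one_le_growth (k : ℕ) : (k : ℝ) ^ θ - 1 ≤ growth θ k := (Nat.sub_one_lt_floor _).le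

lemma growthSum_succ (k : ℕ) : growthSum θ (k + 1) = growthSum θ k + growth θ k :=
  Finset.sum_range_succ _ _

lemma growthSum_succ_le (hθ : 0 ≤ θ) (k : ℕ) :
    (growthSum θ (k + 1) : ℝ) ≤ ((k : ℝ) + 1) ^ (θ + 1) := by
  have hsum : growthSum θ (k + 1) ≤ (k + 1) * growth θ k := by
    simpa [growthSum] using Finset.sum_le_card_nsmul (Finset.range (k + 1)) _ _ fun j hj =>
      growth_mono hθ (Nat.lt_succ_iff.1 (Finset.mem_range.1 hj))
  calc (growthSum θ (k + 1) : ℝ) ≤ ((k : ℝ) + 1) * growth θ k := by exact_mod_cast hsum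
    _ ≤ ((k : ℝ) + 1) * ((k : ℝ) + 1) ^ θ := by
        gcongr
        exact (growth_le k).trans (rpow_le_rpow (by positivity) (by linarith) hθ)
    _ = ((k : ℝ) + 1) ^ (θ + 1) := by rw [rpow_add_one (by positivity)]; ring

/-- The second half of the sum already has `k/2` terms of size at least `(k/2)^θ / 2`. -/
lemma rpow_le_growthSum (hθ : 1 ≤ θ) {k : ℕ} (hk : 4 ≤ k) :
    (k : ℝ) ^ (θ + 1) / (8 * 2 ^ θ) ≤ growthSum θ k := by
  set h := (k + 1) / 2
  have hhalf : (k : ℝ) / 2 ≤ h := by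
    rw [div_le_iff₀ (by norm_num)]
    exact_mod_cast (by omega : k ≤ h * 2)
  have hquarter : (k : ℝ) / 4 ≤ (k - h : ℕ) := by
    rw [div_le_iff₀ (by norm_num)]
    exact_mod_cast (by omega : k ≤ (k - h) * 4)
  have hk2 : (2 : ℝ) ≤ (k : ℝ) / 2 := by
    rw [le_div_iff₀ (by norm_num)]
    exact_mod_cast (by omega : 2 * 2 ≤ k)
  have hpow : (2 : ℝ) ≤ ((k : ℝ) / 2) ^ θ :=
    hk2.trans (self_le_rpow_of_one_le (by linarith) hθ)
  have hgrowth : ((k : ℝ) / 2) ^ θ / 2 ≤ growth θ h := by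
    have := rpow_le_rpow (by positivity) hhalf (by linarith : 0 ≤ θ)
    linarith [sub_one_le_growth (θ := θ) h]
  have htail : (k - h) * growth θ h ≤ growthSum θ k := by
    calc (k - h) * growth θ h = ∑ _j ∈ Finset.Ico h k, growth θ h := by simp
      _ ≤ ∑ j ∈ Finset.Ico h k, growth θ j :=
          Finset.sum_le_sum fun j hj => growth_mono (by linarith) (Finset.mem_Ico.1 hj).1
      _ ≤ growthSum θ k := Finset.sum_le_sum_of_subset fun j hj =>
          Finset.mem_range.2 (Finset.mem_Ico.1 hj).2
  calc (k : ℝ) ^ (θ + 1) / (8 * 2 ^ θ) = (k : ℝ) / 4 * (((k : ℝ) / 2) ^ θ / 2) := by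
        rw [div_rpow (by positivity) (by norm_num), rpow_add_one (by positivity)]
        field_simp
        ring
    _ ≤ (k - h : ℕ) * (growth θ h : ℝ) := by gcongr
    _ ≤ growthSum θ k := by exact_mod_cast htail

lemma eventually_mul_growth_le_growthSum (hθ : 1 ≤ θ) (c : ℕ) :
    ∀ᶠ k in atTop, c * growth θ k ≤ growthSum θ k := by
  filter_upwards [eventually_ge_atTop 4, eventually_ge_atTop ⌈8 * 2 ^ θ * (c : ℝ)⌉₊]
    with k hk hkc
  have hkc' : 8 * 2 ^ θ * (c : ℝ) ≤ k := Nat.ceil_le.1 hkc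
  have : (c : ℝ) * growth θ k ≤ growthSum θ k :=
    calc (c : ℝ) * growth θ k ≤ c * (k : ℝ) ^ θ := by gcongr; exact growth_le k
      _ ≤ (k : ℝ) ^ (θ + 1) / (8 * 2 ^ θ) := by
          rw [le_div_iff₀ (by positivity), rpow_add_one (by positivity)]
          nlinarith [rpow_nonneg (Nat.cast_nonneg k) θ]
      _ ≤ growthSum θ k := rpow_le_growthSum hθ hk
  exact_mod_cast this

lemma exists_mul_growth_lt_add_growthSum (hθ : 1 ≤ θ) (c : ℕ) :
    ∃ B, ∀ k, c * growth θ k < B + growthSum θ k := by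
  obtain ⟨K, hK⟩ := eventually_atTop.1 (eventually_mul_growth_le_growthSum hθ c)
  refine ⟨c * growth θ K + 1, fun k => ?_⟩
  rcases le_total K k with hk | hk
  · have := hK k hk
    omega
  · have := Nat.mul_le_mul_left c (growth_mono (by linarith) hk)
    omega

lemma tendsto_mul_rpow_sub_mul_atTop {c p : ℝ} (hc : 0 < c) (hp : 1 < p) (a : ℝ) :
    Tendsto (fun x : ℝ => c * x ^ p - x * a) atTop atTop := by
  refine (tendsto_id.atTop_mul_atTop₀ (tendsto_atTop_add_const_right _ (-a)
    ((tendsto_rpow_atTop (by linarith : 0 < p - 1)).const_mul_atTop hc))).congr' ?_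
  filter_upwards [eventually_gt_atTop 0] with x hx
  have : x * x ^ (p - 1) = x ^ p := by rw [← rpow_one_add' hx.le (by linarith)]; ring_nf
  simp only [id]
  linear_combination c * this

/-- Since `growthSum θ k ≳ k^(θ+1)` and `(θ+1)ζ > 1`, `(growthSum θ k)^ζ` outgrows `k`. -/
lemma eventually_add_mul_log_two_le (hθ : 1 ≤ θ) {ζ : ℝ} (hζ : 0 < ζ) (hθζ : 1 < (θ + 1) * ζ)
    (Y : ℝ) : ∀ᶠ k : ℕ in atTop, Y + k * log 2 ≤ (growthSum θ k * log 4) ^ ζ := by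
  have hlog4 := log_pos (by norm_num : (1 : ℝ) < 4)
  filter_upwards [((tendsto_mul_rpow_sub_mul_atTop (c := (log 4 / (8 * 2 ^ θ)) ^ ζ)
    (by positivity) hθζ (log 2)).comp tendsto_natCast_atTop_atTop).eventually_ge_atTop Y,
    eventually_ge_atTop 4] with k hY hk
  have hS : (log 4 / (8 * 2 ^ θ)) ^ ζ * (k : ℝ) ^ ((θ + 1) * ζ) ≤ (growthSum θ k * log 4) ^ ζ :=
    calc (log 4 / (8 * 2 ^ θ)) ^ ζ * (k : ℝ) ^ ((θ + 1) * ζ)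
        = ((k : ℝ) ^ (θ + 1) / (8 * 2 ^ θ) * log 4) ^ ζ := by
          rw [rpow_mul (by positivity), ← mul_rpow (by positivity) (by positivity)]
          ring_nf
      _ ≤ (growthSum θ k * log 4) ^ ζ := by gcongr; exact rpow_le_growthSum hθ hk
  simp only [Function.comp_apply] at hY
  linarith

lemma exists_growthSum_succ_le (hθ : 0 ≤ θ) :
    ∃ C, ∀ k, (growthSum θ (k + 1) : ℝ) ≤ C * 2 ^ k := by
  have hlim : Tendsto (fun k : ℕ => ((k : ℝ) + 1) ^ (θ + 1) * exp (-log 2 * ((k : ℝ) + 1)))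
      atTop (𝓝 0) :=
    (tendsto_rpow_mul_exp_neg_mul_atTop_nhds_zero _ _ (log_pos one_lt_two)).comp
      (tendsto_atTop_add_const_right _ 1 tendsto_natCast_atTop_atTop)
  obtain ⟨C, hC⟩ := hlim.bddAbove_range
  refine ⟨2 * C, fun k => (growthSum_succ_le hθ k).trans ?_⟩
  have hexp : exp (-log 2 * ((k : ℝ) + 1)) * 2 ^ k = 1 / 2 := by
    rw [neg_mul, exp_neg, mul_comm, exp_mul, exp_log two_pos, rpow_add_one two_ne_zero,
      rpow_natCast]
    field_simp
  have := mul_le_mul_of_nonneg_right (hC (Set.mem_range_self k)) (by positivity : (0 : ℝ) ≤ 2 ^ k)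
  rw [mul_assoc, hexp] at this
  nlinarith [rpow_nonneg (by positivity : (0 : ℝ) ≤ (k : ℝ) + 1) (θ + 1)]

lemma exists_two_pow_le (hθ : 1 < θ) (β : ℝ) {γ : ℝ} (hγ : 0 < γ) :
    ∃ C > 0, ∀ k, (2 : ℝ) ^ k ≤ C * ((1 / 2) ^ (k + 2)) ^ β * ((2 : ℝ) ^ growth θ k) ^ γ := by
  have hlim : Tendsto (fun k : ℕ => (2 : ℝ) ^ ((2 * β + γ) - (γ * (k : ℝ) ^ θ - k * (1 + β))))
      atTop (𝓝 0) := by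
    refine (tendsto_rpow_atBot_of_base_gt_one _ one_lt_two).comp ?_
    exact tendsto_atBot_add_const_left _ _ (tendsto_neg_atTop_atBot.comp
      ((tendsto_mul_rpow_sub_mul_atTop hγ hθ _).comp tendsto_natCast_atTop_atTop))
  obtain ⟨C, hC⟩ := hlim.bddAbove_range
  have hC0 : 0 < C := (rpow_pos_of_pos two_pos _).trans_le (hC (Set.mem_range_self 0))
  refine ⟨C, hC0, fun k => ?_⟩
  have hgrowth : ((k : ℝ) ^ θ - 1) * γ ≤ growth θ k * γ := by
    gcongr
    exact sub_one_le_growth k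
  have hsplit : (2 : ℝ) ^ k = 2 ^ ((2 * β + γ) - (γ * (k : ℝ) ^ θ - k * (1 + β))) *
      ((1 / 2) ^ (k + 2)) ^ β * 2 ^ (((k : ℝ) ^ θ - 1) * γ) := by
    rw [one_div, inv_pow, inv_rpow (by positivity), ← rpow_natCast, ← rpow_natCast,
      ← rpow_mul (by norm_num), ← rpow_neg (by norm_num), ← rpow_add two_pos,
      ← rpow_add two_pos]
    push_cast
    ring_nf
  rw [hsplit, ← rpow_natCast 2 (growth θ k), ← rpow_mul zero_le_two]
  gcongr
  · exact hC (Set.mem_range_self k)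
  · exact one_le_two

lemma clog_two_le (l : ℕ) : (Nat.clog 2 l : ℝ) ≤ 1 + 2 * log l := by
  rcases Nat.eq_zero_or_pos l with rfl | hl
  · simp
  rw [← natCeil_logb_natCast]
  have hlog := log_natCast_nonneg l
  have h2 : (1 : ℝ) / 2 < log 2 := by linarith [log_two_gt_d9]
  have hlogb : logb 2 l ≤ 2 * log l := by
    rw [logb, div_le_iff₀ (by linarith)]
    nlinarith
  have := Nat.ceil_lt_add_one (logb_nonneg one_lt_two (by exact_mod_cast hl : (1 : ℝ) ≤ l))
  push_cast
  linarith

end Growth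

section Exponents

lemma two_pow_mul_half_pow_sq_le {ν e n : ℕ} (h : ν + n ≤ 2 * e) :
    (2 : ℝ) ^ ν * ((1 / 2) ^ e) ^ 2 ≤ (1 / 2) ^ n := by
  rw [← pow_mul, mul_comm e, ← Nat.add_sub_cancel' (h.trans' (Nat.le_add_right ν n)), pow_add,
    ← mul_assoc, ← mul_pow]
  norm_num
  exact pow_le_pow_of_le_one (by norm_num) (by norm_num) (by omega)

lemma two_pow_mul_exp_neg_le {ν n : ℕ} {C m : ℝ} (hC : 0 < C)
    (h : log C + (ν + n : ℕ) * log 2 ≤ m) : (2 : ℝ) ^ ν * (C * exp (-m)) ≤ (1 / 2) ^ n := by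
  have h2 : ∀ j : ℕ, (2 : ℝ) ^ j = exp (j * log 2) := fun j => by
    rw [← exp_log (by positivity : (0 : ℝ) < 2 ^ j), log_pow]
  rw [one_div, inv_pow, h2, h2, ← exp_log hC, ← exp_neg, ← exp_add, ← exp_add, exp_le_exp]
  push_cast at h
  linarith

lemma sq_mul_half_pow_add_le {N ν e e' : ℕ} {C m : ℝ} (hC : 0 < C) (hN : N ^ 2 ≤ 2 ^ ν)
    (h₁ : ν + (e' + 1) ≤ 2 * e) (h₂ : log C + (ν + (e' + 1) : ℕ) * log 2 ≤ m) :
    (N : ℝ) ^ 2 * (((1 / 2) ^ e) ^ 2 + C * exp (-m)) ≤ (1 / 2) ^ e' := by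
  have hN' : (N : ℝ) ^ 2 ≤ 2 ^ ν := by exact_mod_cast hN
  calc (N : ℝ) ^ 2 * (((1 / 2) ^ e) ^ 2 + C * exp (-m))
      ≤ 2 ^ ν * ((1 / 2) ^ e) ^ 2 + 2 ^ ν * (C * exp (-m)) := by
        rw [← mul_add]; gcongr
    _ ≤ (1 / 2) ^ (e' + 1) + (1 / 2) ^ (e' + 1) :=
        add_le_add (two_pow_mul_half_pow_sq_le h₁) (two_pow_mul_exp_neg_le hC h₂)
    _ = (1 / 2) ^ e' := by rw [pow_succ]; ring

lemma sq_pow_mul_four_pow_le (l F d : ℕ) :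
    ((l * 4 ^ F) ^ d) ^ 2 ≤ 2 ^ (2 * d * Nat.clog 2 l + 4 * d * F) := by
  have hl : l * 4 ^ F ≤ 2 ^ (Nat.clog 2 l + 2 * F) := by
    rw [pow_add, pow_mul]
    exact Nat.mul_le_mul (Nat.le_pow_clog one_lt_two l) le_rfl
  calc ((l * 4 ^ F) ^ d) ^ 2 ≤ ((2 ^ (Nat.clog 2 l + 2 * F)) ^ d) ^ 2 := by gcongr
    _ = 2 ^ (2 * d * Nat.clog 2 l + 4 * d * F) := by rw [← pow_mul, ← pow_mul]; ring_nf

end Exponents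

/-- The exponent `e_k` of the bound `P^{u_k}[G_{x,k}] ≤ 2^{-e_k}`, where `t = ⌈log₂ l₀⌉`. -/
noncomputable def cascadeExponent (d t B₀ : ℕ) (θ : ℝ) (k : ℕ) : ℕ :=
  2 * d * t + B₀ + growthSum θ k + 2 ^ (k + 1)

lemma two_pow_le_cascadeExponent (d t B₀ : ℕ) (θ : ℝ) (k : ℕ) :
    2 ^ k ≤ cascadeExponent d t B₀ θ k := by
  have := Nat.pow_le_pow_right two_pos (Nat.le_succ k)
  simp only [cascadeExponent]
  omega

/-- The recursion `p_{k+1} ≥ l_k^{2d} (p_k² + C e^{-m})` for `p_k = 2^{-e_k}`: squaring gains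
`2e_k - e_{k+1} = 2dt + B₀ + growthSum θ k - growth θ k` halvings, which pay for
`l_k^{2d} ≤ 2^{2dt + 4d growth θ k}` and one more halving. -/
lemma cascadeExponent_step {d l₀ B₀ k : ℕ} {θ C m : ℝ} (hC : 0 < C)
    (hB₀ : (4 * d + 1) * growth θ k < B₀ + growthSum θ k)
    (hm : log C + ((4 * d * Nat.clog 2 l₀ + 4 * d * growth θ k + B₀ + growthSum θ (k + 1)
      + 2 ^ (k + 2) + 1 : ℕ) : ℝ) * log 2 ≤ m) :
    (((l₀ * 4 ^ growth θ k) ^ d : ℕ) : ℝ) ^ 2 *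
      (((1 / 2) ^ cascadeExponent d (Nat.clog 2 l₀) B₀ θ k) ^ 2 + C * exp (-m))
      ≤ (1 / 2) ^ cascadeExponent d (Nat.clog 2 l₀) B₀ θ (k + 1) := by
  have hS := growthSum_succ (θ := θ) k
  have hpow : 2 ^ (k + 1 + 1) = 2 * 2 ^ (k + 1) := by ring
  refine sq_mul_half_pow_add_le hC (sq_pow_mul_four_pow_le l₀ _ d) ?_ ((le_of_eq ?_).trans hm)
  · simp only [cascadeExponent]
    nlinarith
  · simp only [cascadeExponent]
    push_cast
    ring

section Budget

variable {θ : ℝ}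

/-- All the dyadic exponents of one recursion step are `O((1 + log l₀) 2^k)`. -/
lemma exists_budget (hθ : 0 ≤ θ) (d B₀ : ℕ) (Cd : ℝ) : ∃ M > 0, ∀ l₀ k : ℕ,
    log Cd + ((4 * d * Nat.clog 2 l₀ + 4 * d * growth θ k + B₀ + growthSum θ (k + 1) + 2 ^ (k + 2)
      + 1 : ℕ) : ℝ) * log 2 ≤ M * (1 + log l₀) * 2 ^ k := by
  obtain ⟨C, hC⟩ := exists_growthSum_succ_le hθ
  have hC0 : 0 ≤ C := by simpa using (Nat.cast_nonneg _).trans (hC 0)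
  set K : ℝ := 8 * d + (4 * d + 1) * C + B₀ + 5
  have hlog2 := log_pos one_lt_two
  refine ⟨|log Cd| + K * log 2, by positivity, fun l₀ k => ?_⟩
  set E := 1 + log l₀
  set T : ℝ := 2 ^ k
  have hE : 1 ≤ E := by simp [E, log_natCast_nonneg]
  have hT : 1 ≤ T := one_le_pow₀ one_le_two
  have hET : 1 ≤ E * T := one_le_mul_of_one_le_of_one_le hE hT
  have hEET : E ≤ E * T := le_mul_of_one_le_right (by linarith) hT
  have hTET : T ≤ E * T := le_mul_of_one_le_left (by linarith) hE
  have hS := hC k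
  have hF : (growth θ k : ℝ) ≤ growthSum θ (k + 1) := by
    exact_mod_cast (growthSum_succ (θ := θ) k).symm ▸ Nat.le_add_left _ _
  have ht := clog_two_le l₀
  have hexp : ((4 * d * Nat.clog 2 l₀ + 4 * d * growth θ k + B₀ + growthSum θ (k + 1)
      + 2 ^ (k + 2) + 1 : ℕ) : ℝ) ≤ K * (E * T) := by
    push_cast
    have hd : (0 : ℝ) ≤ d := Nat.cast_nonneg d
    have : C * T ≤ C * (E * T) := mul_le_mul_of_nonneg_left hTET hC0
    have : (B₀ : ℝ) + 1 ≤ (B₀ + 1) * (E * T) := le_mul_of_one_le_right (by positivity) hET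
    have : (2 : ℝ) ^ (k + 2) = 4 * T := by rw [pow_add]; norm_num [T]; ring
    simp only [K]
    nlinarith
  have hlogCd : log Cd ≤ |log Cd| * (E * T) :=
    (le_abs_self _).trans (le_mul_of_one_le_right (abs_nonneg _) hET)
  nlinarith

lemma mul_le_rpow_div_six {X E r γ : ℝ} (hX : 0 ≤ X) (hE : 1 ≤ E) (hγ : 0 < γ)
    (h : 6 * X ^ γ⁻¹ * E ^ (2 / γ) ≤ r) : X * E ≤ (r / 6) ^ γ := by
  have hr : X ^ γ⁻¹ * E ^ (2 / γ) ≤ r / 6 := by rw [le_div_iff₀ (by norm_num)]; linarith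
  calc X * E ≤ X * E ^ (2 : ℝ) := by
        gcongr
        simpa using rpow_le_rpow_of_exponent_le hE (by norm_num : (1 : ℝ) ≤ 2)
    _ = (X ^ γ⁻¹ * E ^ (2 / γ)) ^ γ := by
        rw [mul_rpow (by positivity) (by positivity), ← rpow_mul hX, ← rpow_mul (by linarith),
          inv_mul_cancel₀ hγ.ne', div_mul_cancel₀ _ hγ.ne', rpow_one]
    _ ≤ (r / 6) ^ γ := by gcongr

/-- The first term of the decoupling error at step `k`, with `r_k = r₀ 2^⌊k^θ⌋` and
`u_k - u_{k+1} = δ 2^{-(k+2)}`, pays for the budget `M E 2^k`. -/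
lemma mul_two_pow_le_gap_rpow {β γ δ cd M Cg E : ℝ} (hδ : 0 < δ) (hcd : 0 < cd) (hγ : 0 < γ)
    (hM : 0 ≤ M) (hCg : 0 ≤ Cg)
    (hgap : ∀ k, (2 : ℝ) ^ k ≤ Cg * ((1 / 2) ^ (k + 2)) ^ β * ((2 : ℝ) ^ growth θ k) ^ γ)
    (hE : 1 ≤ E) {r₀ : ℕ} (hr₀ : 6 * (M * Cg / (cd * δ ^ β)) ^ γ⁻¹ * E ^ (2 / γ) ≤ r₀)
    (k : ℕ) :
    M * E * 2 ^ k ≤ cd * ((δ * (1 / 2) ^ (k + 2)) ^ β *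
      (((r₀ * 2 ^ growth θ k : ℕ) : ℝ) / 6) ^ γ) := by
  have hr := mul_le_rpow_div_six (by positivity) hE hγ hr₀
  calc M * E * 2 ^ k ≤ M * E * (Cg * ((1 / 2) ^ (k + 2)) ^ β * ((2 : ℝ) ^ growth θ k) ^ γ) := by
        gcongr; exact hgap k
    _ = cd * δ ^ β * (M * Cg / (cd * δ ^ β) * E) *
          (((1 / 2) ^ (k + 2)) ^ β * ((2 : ℝ) ^ growth θ k) ^ γ) := by
        field_simp
    _ ≤ cd * δ ^ β * ((r₀ : ℝ) / 6) ^ γ *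
          (((1 / 2) ^ (k + 2)) ^ β * ((2 : ℝ) ^ growth θ k) ^ γ) := by
        gcongr
    _ = _ := by
        rw [mul_rpow hδ.le (by positivity), Nat.cast_mul, mul_div_right_comm,
          mul_rpow (by positivity) (by positivity)]
        push_cast
        ring

/-- The second term of the decoupling error pays for the budget once `L₀` is large, because
`L_k ≥ L₀ 4^{growthSum θ k}`. -/
lemma exists_forall_mul_two_pow_le_mul_exp (hθ : 1 ≤ θ) {ζ : ℝ} (hζ : 0 < ζ)
    (hθζ : 1 < (θ + 1) * ζ) (A : ℝ) {c : ℝ} (hc : 0 < c) : ∃ N : ℕ, ∀ L₀ : ℕ, N ≤ L₀ → ∀ k,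
      ∀ L : ℝ, (L₀ * 4 ^ growthSum θ k : ℝ) ≤ L → A * 2 ^ k ≤ c * exp ((log L) ^ ζ) := by
  set Y := log (max (A / c) 1)
  obtain ⟨K, hK⟩ := eventually_atTop.1 (eventually_add_mul_log_two_le hθ hζ hθζ Y)
  obtain ⟨N, hN⟩ := eventually_atTop.1 ((((tendsto_rpow_atTop hζ).comp
    (tendsto_log_atTop.comp tendsto_natCast_atTop_atTop)).eventually_ge_atTop
      (Y + K * log 2)).and (eventually_ge_atTop 1))
  refine ⟨N, fun L₀ hL₀ k L hL => ?_⟩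
  obtain ⟨hNlog, hN1⟩ := hN L₀ hL₀
  have hL₀ : (1 : ℝ) ≤ L₀ := by exact_mod_cast hN1
  have h4 : (1 : ℝ) ≤ 4 ^ growthSum θ k := one_le_pow₀ (by norm_num)
  have hlogL : ∀ y : ℝ, 1 ≤ y → y ≤ L → (log y) ^ ζ ≤ (log L) ^ ζ := fun y hy hyL =>
    rpow_le_rpow (log_nonneg hy) (log_le_log (by linarith) hyL) hζ.le
  have hY : Y + k * log 2 ≤ (log L) ^ ζ := by
    rcases le_total K k with hk | hk
    · refine (hK k hk).trans ?_
      rw [← log_pow]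
      exact hlogL _ h4 (by nlinarith)
    · have : (k : ℝ) * log 2 ≤ K * log 2 := by gcongr
      simp only [Function.comp_apply] at hNlog
      exact (by linarith : Y + k * log 2 ≤ _).trans (hNlog.trans (hlogL _ hL₀ (by nlinarith)))
  calc A * 2 ^ k = c * (A / c * 2 ^ k) := by field_simp
    _ ≤ c * (max (A / c) 1 * 2 ^ k) := by gcongr; exact le_max_left _ _
    _ = c * exp (Y + k * log 2) := by
        rw [exp_add, exp_log (by positivity), mul_comm (k : ℝ), exp_mul, exp_log two_pos,
          rpow_natCast]
    _ ≤ c * exp ((log L) ^ ζ) := by gcongr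

lemma mul_four_pow_growthSum_le {l₀ : ℕ} (hl₀ : 1 ≤ l₀) {L : ℕ → ℕ}
    (hL : ∀ k, L (k + 1) = l₀ * 4 ^ growth θ k * L k) (k : ℕ) :
    L 0 * 4 ^ growthSum θ k ≤ L k := by
  induction k with
  | zero => simp [growthSum]
  | succ k ih =>
    rw [hL, growthSum_succ, pow_add]
    calc L 0 * (4 ^ growthSum θ k * 4 ^ growth θ k) = L 0 * 4 ^ growthSum θ k * 4 ^ growth θ k := by
          ring
      _ ≤ L k * (l₀ * 4 ^ growth θ k) := Nat.mul_le_mul ih (Nat.le_mul_of_pos_left _ hl₀)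
      _ = l₀ * 4 ^ growth θ k * L k := by ring

end Budget

/-- The parameters `u_k` of the induction. -/
noncomputable def halvingSeq (u δ : ℝ) (k : ℕ) : ℝ := u + δ * (1 / 2) ^ (k + 1)

lemma halvingSeq_sub_succ (u δ : ℝ) (k : ℕ) :
    halvingSeq u δ k - halvingSeq u δ (k + 1) = δ * (1 / 2) ^ (k + 2) := by
  simp only [halvingSeq]; ring

lemma lt_halvingSeq {u δ : ℝ} (hδ : 0 < δ) (k : ℕ) : u < halvingSeq u δ k :=
  lt_add_of_pos_right u (by positivity)

lemma halvingSeq_lt {u δ : ℝ} (hδ : 0 < δ) (k : ℕ) : halvingSeq u δ k < u + δ :=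
  add_lt_add_right (mul_lt_of_lt_one_right hδ
    (pow_lt_one₀ (by norm_num : (0 : ℝ) ≤ 1 / 2) (by norm_num) (Nat.succ_ne_zero k))) u

lemma halvingSeq_succ_lt {u δ : ℝ} (hδ : 0 < δ) (k : ℕ) :
    halvingSeq u δ (k + 1) < halvingSeq u δ k := by
  have := halvingSeq_sub_succ u δ k
  have : 0 < δ * (1 / 2) ^ (k + 2) := by positivity
  linarith

theorem decoupling_to_cascading_general
    (d : ℕ) (hd : 1 ≤ d) (a b : ℝ)
    (P : ℝ → Measure (Config d))
    (hprob : ∀ u, a < u → u < b → IsProbabilityMeasure (P u))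
    (β γ ζ : ℝ) (hγ : 0 < γ) (hζ : 0 < ζ)
    (Cd cd : ℝ) (hCd : 0 < Cd) (hcd : 0 < cd)
    (hdec : ∀ L s : ℕ, 1 ≤ L → 1 ≤ s → ∀ x₁ x₂ : Fin d → ℤ, linf (x₁ - x₂) = s * L →
      ∀ u u' : ℝ, a < u → u < u' → u' < b →
        ∀ A₁ A₂ : Set (Config d), IncrEvent A₁ → IncrEvent A₂ →
          DepOn A₁ {y | linf (y - x₁) ≤ L} → DepOn A₂ {y | linf (y - x₂) ≤ L} →
          (P u (A₁ ∩ A₂)).toReal ≤ (P u' A₁).toReal * (P u' A₂).toReal +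
            Cd * Real.exp (-cd * min ((u' - u) ^ β * (s : ℝ) ^ γ)
              (Real.exp ((Real.log L) ^ ζ))))
    (θ : ℝ) (hθ : 1 < θ) (hθζ : (θ + 1) * ζ > 1)
    (LL : ℕ → ℕ → ℕ → ℕ)
    (hLL0 : ∀ l₀ L₀, LL l₀ L₀ 0 = L₀)
    (hLLs : ∀ l₀ L₀ k, LL l₀ L₀ (k + 1) = (l₀ * 4 ^ ⌊(k : ℝ) ^ θ⌋₊) * LL l₀ L₀ k)
    (G0 : ℕ → (Fin d → ℤ) → Set (Config d))
    (hseedIncr : ∀ L₀ x, IncrEvent (G0 L₀ x))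
    (hseedDep : ∀ L₀ x, DepOn (G0 L₀ x)
      {y | ∀ i, x i - (L₀ : ℤ) ≤ y i ∧ y i < x i + 3 * (L₀ : ℤ)})
    (G : ℕ → ℕ → ℕ → ℕ → (Fin d → ℤ) → Set (Config d))
    (hG0 : ∀ l₀ r₀ L₀ x, G l₀ r₀ L₀ 0 x = G0 L₀ x)
    (hGcasc : ∀ l₀ r₀ L₀ k x, G l₀ r₀ L₀ (k + 1) x =
      ⋃ (x₁ ∈ boxLam x (LL l₀ L₀ k) (LL l₀ L₀ (k + 1)))
        (x₂ ∈ boxLam x (LL l₀ L₀ k) (LL l₀ L₀ (k + 1)))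
        (_ : (r₀ * 2 ^ ⌊(k : ℝ) ^ θ⌋₊) * LL l₀ L₀ k < linf (x₁ - x₂)),
        G l₀ r₀ L₀ k x₁ ∩ G l₀ r₀ L₀ k x₂)
    (u' : ℝ) (hu'b : u' < b)
    (hlim : Tendsto (fun L₀ : ℕ => ⨆ (x : Fin d → ℤ) (_ : x ∈ latticeZ d L₀), P u' (G0 L₀ x))
      atTop (𝓝 0)) :
    ∀ u : ℝ, a < u → u < u' →
      ∃ C₂ : ℝ, 0 < C₂ ∧
        ∀ l₀ : ℕ, 1 ≤ l₀ → ∀ r₀ : ℕ, C₂ * (1 + Real.log l₀) ^ (2 / γ) ≤ (r₀ : ℝ) →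
          ∃ Nbig : ℕ, ∀ L₀ : ℕ, Nbig ≤ L₀ →
            ∀ k : ℕ, ∀ x ∈ latticeZ d (LL l₀ L₀ k),
              P u (G l₀ r₀ L₀ k x) ≤ ENNReal.ofReal ((1 / 2 : ℝ) ^ (2 ^ k)) := by
  intro u hau huu'
  replace hdec : DecouplingIneq P a b β γ ζ Cd cd := hdec
  obtain ⟨B₀, hB₀⟩ := exists_mul_growth_lt_add_growthSum hθ.le (4 * d + 1)
  obtain ⟨M, hM, hbudget⟩ := exists_budget (by linarith : (0 : ℝ) ≤ θ) d B₀ Cd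
  obtain ⟨Cg, hCg, hgap⟩ := exists_two_pow_le hθ β hγ
  have hδ : 0 < u' - u := sub_pos.2 huu'
  refine ⟨6 * (M * Cg / (cd * (u' - u) ^ β)) ^ γ⁻¹, by positivity, fun l₀ hl₀ r₀ hr₀ => ?_⟩
  set p : ℕ → ℝ := fun k => (1 / 2) ^ cascadeExponent d (Nat.clog 2 l₀) B₀ θ k
  obtain ⟨N₁, hN₁⟩ := eventually_atTop.1
    (hlim.eventually_lt_const (ENNReal.ofReal_pos.2 (by positivity : 0 < p 0)))
  obtain ⟨N₂, hN₂⟩ := exists_forall_mul_two_pow_le_mul_exp hθ.le hζ hθζ (M * (1 + log l₀)) hcd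
  refine ⟨max (max N₁ N₂) 1, fun L₀ hL₀ => ?_⟩
  set v := halvingSeq u (u' - u)
  have hvu' k : v k < u' := (halvingSeq_lt hδ k).trans_eq (add_sub_cancel u u')
  have hcasc : IsCascade (G l₀ r₀ L₀) (LL l₀ L₀) fun k => r₀ * 2 ^ growth θ k := hGcasc l₀ r₀ L₀
  have hscale : ∀ k, LL l₀ L₀ (k + 1) = l₀ * 4 ^ growth θ k * LL l₀ L₀ k := hLLs l₀ L₀
  have hLk k : L₀ * 4 ^ growthSum θ k ≤ LL l₀ L₀ k := by
    simpa only [hLL0] using mul_four_pow_growthSum_le hl₀ hscale k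
  have hpos k : 0 < LL l₀ L₀ k := (Nat.mul_pos (by omega) (by positivity)).trans_le (hLk k)
  have hincr₀ x : IncrEvent (G l₀ r₀ L₀ 0 x) := hG0 l₀ r₀ L₀ x ▸ hseedIncr L₀ x
  have hdep₀ x : DepOn (G l₀ r₀ L₀ 0 x) (localBox x (LL l₀ L₀ 0)) := by
    rw [hG0, hLL0]; exact hseedDep L₀ x
  have hbound := hcasc.measure_le_of_recursion hdec hγ hCd.le hcd.le hprob hscale hpos hincr₀
    hdep₀ (v := v) (fun k => hau.trans (lt_halvingSeq hδ k)) (fun k => (hvu' k).trans hu'b)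
    (halvingSeq_succ_lt hδ) (p := p) (fun k => by positivity) ?base ?step
  · intro k x hx
    calc P u (G l₀ r₀ L₀ k x) ≤ P (v k) (G l₀ r₀ L₀ k x) :=
          hcasc.measure_mono hdec hd hγ hζ hcd hprob hscale hpos hincr₀ hdep₀ hx hau
            (lt_halvingSeq hδ k) ((hvu' k).trans hu'b)
      _ ≤ ENNReal.ofReal (p k) := hbound k x hx
      _ ≤ ENNReal.ofReal ((1 / 2) ^ (2 ^ k)) := ENNReal.ofReal_le_ofReal
          (pow_le_pow_of_le_one (by norm_num) (by norm_num) (two_pow_le_cascadeExponent ..))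
  case base =>
    intro x hx
    calc P (v 0) (G l₀ r₀ L₀ 0 x) ≤ P u' (G0 L₀ x) :=
          hG0 l₀ r₀ L₀ x ▸ hcasc.measure_mono hdec hd hγ hζ hcd hprob hscale hpos hincr₀ hdep₀ hx
            (hau.trans (lt_halvingSeq hδ 0)) (hvu' 0) hu'b
      _ ≤ ⨆ (x : Fin d → ℤ) (_ : x ∈ latticeZ d L₀), P u' (G0 L₀ x) :=
          le_iSup₂ (f := fun x (_ : x ∈ latticeZ d L₀) => P u' (G0 L₀ x)) x (hLL0 l₀ L₀ ▸ hx)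
      _ ≤ ENNReal.ofReal (p 0) := (hN₁ L₀ (by omega)).le
  case step =>
    intro k
    rw [halvingSeq_sub_succ, neg_mul]
    refine cascadeExponent_step hCd (hB₀ k) ((hbudget l₀ k).trans ?_)
    rw [mul_min_of_nonneg _ _ hcd.le]
    exact le_min (mul_two_pow_le_gap_rpow hδ hcd hγ hM.le hCg.le hgap
        (by simp [log_natCast_nonneg]) hr₀ k)
      (hN₂ L₀ (by omega) k _ (by exact_mod_cast (hLk k).trans (by omega)))

/-- Abstract decoupling-to-cascading bound (Theorem 6.1, increasing case).
`P u` is a family of probability measures on `{0,1}^{ℤ^d}` satisfying the weak decoupling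
inequality **D**(a) with exponents `β, γ, ζ > 0`. Fix `θ > 1` with `(θ+1)ζ > 1`, scales
`l_k = l₀4^{⌊k^θ⌋}`, `r_k = r₀2^{⌊k^θ⌋}`, `L_{k+1} = l_k L_k` (encoded in `LL l₀ L₀ k`), seeds
`G0 L₀ x` (increasing, local on `x + [−L₀,3L₀)^d`, with `sup_x P^{u'}[G0 L₀ x] → 0` as
`L₀ → ∞`), and cascading events `G l₀ r₀ L₀ (k+1) x`. Then for every `u ∈ (a,u')` there is a
constant `C₂ = C₂(u,u')` such that for all `l₀ ≥ 1`, all `r₀ ≥ C₂(1+log l₀)^{2/γ}` and all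
sufficiently large `L₀`, `sup_{x ∈ L_kℤ^d} P^u[G_{x,k}] ≤ 2^{−2^k}` for all `k`. -/
theorem decoupling_to_cascading
    (d : ℕ) (hd : 1 ≤ d) (a b : ℝ) (hab : a < b)
    (P : ℝ → Measure (Config d))
    (hprob : ∀ u, a < u → u < b → IsProbabilityMeasure (P u))
    (β γ ζ : ℝ) (hβ : 0 < β) (hγ : 0 < γ) (hζ : 0 < ζ)
    (Cd cd : ℝ) (hCd : 0 < Cd) (hcd : 0 < cd)
    (hdec : ∀ L s : ℕ, 1 ≤ L → 1 ≤ s → ∀ x₁ x₂ : Fin d → ℤ, linf (x₁ - x₂) = s * L →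
      ∀ u u' : ℝ, a < u → u < u' → u' < b →
        ∀ A₁ A₂ : Set (Config d), IncrEvent A₁ → IncrEvent A₂ →
          DepOn A₁ {y | linf (y - x₁) ≤ L} → DepOn A₂ {y | linf (y - x₂) ≤ L} →
          (P u (A₁ ∩ A₂)).toReal ≤ (P u' A₁).toReal * (P u' A₂).toReal +
            Cd * Real.exp (-cd * min ((u' - u) ^ β * (s : ℝ) ^ γ)
              (Real.exp ((Real.log L) ^ ζ))))
    (θ : ℝ) (hθ : 1 < θ) (hθζ : (θ + 1) * ζ > 1)
    (LL : ℕ → ℕ → ℕ → ℕ)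
    (hLL0 : ∀ l₀ L₀, LL l₀ L₀ 0 = L₀)
    (hLLs : ∀ l₀ L₀ k, LL l₀ L₀ (k + 1) = (l₀ * 4 ^ ⌊(k : ℝ) ^ θ⌋₊) * LL l₀ L₀ k)
    (G0 : ℕ → (Fin d → ℤ) → Set (Config d))
    (hseedIncr : ∀ L₀ x, IncrEvent (G0 L₀ x))
    (hseedDep : ∀ L₀ x, DepOn (G0 L₀ x)
      {y | ∀ i, x i - (L₀ : ℤ) ≤ y i ∧ y i < x i + 3 * (L₀ : ℤ)})
    (G : ℕ → ℕ → ℕ → ℕ → (Fin d → ℤ) → Set (Config d))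
    (hG0 : ∀ l₀ r₀ L₀ x, G l₀ r₀ L₀ 0 x = G0 L₀ x)
    (hGcasc : ∀ l₀ r₀ L₀ k x, G l₀ r₀ L₀ (k + 1) x =
      ⋃ (x₁ ∈ boxLam x (LL l₀ L₀ k) (LL l₀ L₀ (k + 1)))
        (x₂ ∈ boxLam x (LL l₀ L₀ k) (LL l₀ L₀ (k + 1)))
        (_ : (r₀ * 2 ^ ⌊(k : ℝ) ^ θ⌋₊) * LL l₀ L₀ k < linf (x₁ - x₂)),
        G l₀ r₀ L₀ k x₁ ∩ G l₀ r₀ L₀ k x₂)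
    (u' : ℝ) (hu'a : a < u') (hu'b : u' < b)
    (hlim : Tendsto (fun L₀ : ℕ => ⨆ (x : Fin d → ℤ) (_ : x ∈ latticeZ d L₀), P u' (G0 L₀ x))
      atTop (𝓝 0)) :
    ∀ u : ℝ, a < u → u < u' →
      ∃ C₂ : ℝ, 0 < C₂ ∧
        ∀ l₀ : ℕ, 1 ≤ l₀ → ∀ r₀ : ℕ, C₂ * (1 + Real.log l₀) ^ (2 / γ) ≤ (r₀ : ℝ) →
          ∃ Nbig : ℕ, ∀ L₀ : ℕ, Nbig ≤ L₀ →
            ∀ k : ℕ, ∀ x ∈ latticeZ d (LL l₀ L₀ k),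
              P u (G l₀ r₀ L₀ k x) ≤ ENNReal.ofReal ((1 / 2 : ℝ) ^ (2 ^ k)) :=
  decoupling_to_cascading_general d hd a b P hprob β γ ζ hγ hζ Cd cd hCd hcd hdec θ hθ hθζ LL hLL0
    hLLs G0 hseedIncr hseedDep G hG0 hGcasc u' hu'b hlim
end
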